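/- arXiv:2602.21159 — 13 statements merged into one kernel-verified Lean document; each statement's English description precedes it below -/
import Mathlib

section
/- Let α ∈ ℝ be irrational. Then the set 𝓝₁(α) = {λ ∈ ℝ : D(α,λ) fails} is a dense G_δ subset of ℝ (in particular it is comeager in ℝ). -/
/-- The Diophantine condition `D(α, λ)` for a single coefficient (`N = 1`). -/
def dioph1 (α lam : ℂ) : Prop :=
  ∃ C > (0 : ℝ), ∃ M > (0 : ℝ), ∃ R > (0 : ℝ),
    ∀ τ ξ : ℤ, R ≤ (|τ| : ℝ) + (|ξ| : ℝ) →
      C * (((|τ| : ℝ) + (|ξ| : ℝ)) ^ (-M)) ≤ ‖(τ : ℂ) + α * (ξ : ℂ) - lam‖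

/-!
The set of `λ` where `D(α, λ)` holds is the countable union of the closed sets `F_n` on which
the estimate holds with the constants `1/(n+1)`, `n+1`, `n+1`. Each `F_n` misses every point
`τ + αξ` with `ξ` a nonzero multiple of `n+1`, where `τ + αξ - λ` vanishes, and for irrational
`α` these points are dense in `ℝ`. So the complement of `D` is a countable intersection of dense
open sets.
-/

def diophSet (α C M R : ℝ) : Set ℝ :=
  {x | ∀ τ ξ : ℤ, R ≤ (|τ| : ℝ) + (|ξ| : ℝ) →
    C * (((|τ| : ℝ) + (|ξ| : ℝ)) ^ (-M)) ≤ ‖(τ : ℂ) + (α : ℂ) * (ξ : ℂ) - (x : ℂ)‖}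

section diophSet

variable {α : ℝ}

theorem dioph1_iff_exists_mem_diophSet {x : ℝ} :
    dioph1 (α : ℂ) (x : ℂ) ↔ ∃ C > (0 : ℝ), ∃ M > (0 : ℝ), ∃ R > (0 : ℝ), x ∈ diophSet α C M R :=
  Iff.rfl

theorem isClosed_diophSet (C M R : ℝ) : IsClosed (diophSet α C M R) := by
  simp only [diophSet, Set.ofPred_forall]
  refine isClosed_iInter fun τ ↦ isClosed_iInter fun ξ ↦ isClosed_iInter fun _ ↦ ?_
  exact isClosed_le continuous_const (by fun_prop)

theorem diophSet_mono {C C' M M' R R' : ℝ} (hC : 0 ≤ C) (hCC' : C' ≤ C) (hMM' : M ≤ M')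
    (hRR' : R ≤ R') (hR' : 1 ≤ R') : diophSet α C M R ⊆ diophSet α C' M' R' := by
  intro x hx τ ξ hb
  have hb1 : 1 ≤ (|τ| : ℝ) + (|ξ| : ℝ) := hR'.trans hb
  calc C' * (((|τ| : ℝ) + (|ξ| : ℝ)) ^ (-M'))
      ≤ C * (((|τ| : ℝ) + (|ξ| : ℝ)) ^ (-M)) :=
        mul_le_mul hCC' (Real.rpow_le_rpow_of_exponent_le hb1 (neg_le_neg hMM'))
          (by positivity) hC
    _ ≤ _ := hx τ ξ (hRR'.trans hb)

theorem setOf_dioph1_eq_iUnion (α : ℝ) :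
    {x : ℝ | dioph1 (α : ℂ) (x : ℂ)} =
      ⋃ n : ℕ, diophSet α ((n : ℝ) + 1)⁻¹ ((n : ℝ) + 1) ((n : ℝ) + 1) := by
  ext x
  simp only [Set.mem_ofPred_eq, Set.mem_iUnion, dioph1_iff_exists_mem_diophSet]
  constructor
  · rintro ⟨C, hC, M, -, R, -, hx⟩
    obtain ⟨n, hn⟩ := exists_nat_ge (max C⁻¹ (max M R))
    simp only [max_le_iff] at hn
    refine ⟨n, diophSet_mono hC.le ?_ (by linarith) (by linarith) (by linarith) hx⟩
    exact inv_le_of_inv_le₀ hC (by linarith)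
  · rintro ⟨n, hx⟩
    exact ⟨_, by positivity, _, by positivity, _, by positivity, hx⟩

theorem int_add_mul_notMem_diophSet {C M R : ℝ} (hC : 0 < C) {τ ξ : ℤ} (hξ : ξ ≠ 0)
    (hR : R ≤ (|τ| : ℝ) + (|ξ| : ℝ)) : (τ + α * ξ : ℝ) ∉ diophSet α C M R := by
  intro hx
  have hb : (0 : ℝ) < (|τ| : ℝ) + (|ξ| : ℝ) := by
    have : (0 : ℝ) < |(ξ : ℝ)| := abs_pos.mpr (Int.cast_ne_zero.mpr hξ)
    positivity
  have hzero : ‖(τ : ℂ) + (α : ℂ) * (ξ : ℂ) - ((τ + α * ξ : ℝ) : ℂ)‖ = 0 := by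
    push_cast
    simp
  have := hx τ ξ hR
  rw [hzero] at this
  have : 0 < C * (((|τ| : ℝ) + (|ξ| : ℝ)) ^ (-M)) := by positivity
  linarith

theorem dense_compl_diophSet (hα : Irrational α) {C : ℝ} (hC : 0 < C) (M R : ℝ) :
    Dense (diophSet α C M R)ᶜ := by
  obtain ⟨k, hk⟩ := exists_nat_ge R
  set β : ℝ := ((k : ℝ) + 1) * α
  have hβ : Irrational (β / 1) := by
    simpa [β] using hα.natCast_mul (Nat.succ_ne_zero k)
  -- Removing the integers forces the coefficient of `β` to be nonzero.
  have hdense : Dense ((AddSubgroup.closure {β, 1} : Set ℝ) ∩ (Set.range ((↑) : ℤ → ℝ))ᶜ) :=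
    (dense_addSubgroupClosure_pair_iff.mpr hβ).inter_of_isOpen_right
      ((Set.countable_range _).dense_compl ℝ)
      Int.isClosedEmbedding_coe_real.isClosed_range.isOpen_compl
  refine hdense.mono ?_
  rintro _ ⟨hy, hyZ⟩
  obtain ⟨m, n, rfl⟩ := AddSubgroup.mem_closure_pair.mp hy
  have hm : m ≠ 0 := by
    rintro rfl
    exact hyZ ⟨n, by simp⟩
  have hξ : ((k : ℤ) + 1) * m ≠ 0 := mul_ne_zero (by omega) hm
  have hR : R ≤ (|n| : ℝ) + (|(((k : ℤ) + 1) * m : ℤ)| : ℝ) := by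
    have : (k : ℤ) + 1 ≤ |n| + |((k : ℤ) + 1) * m| := by
      rw [abs_mul]
      nlinarith [abs_nonneg n, Int.one_le_abs hm, abs_of_nonneg (by omega : (0 : ℤ) ≤ k + 1)]
    calc R ≤ ((k : ℤ) + 1 : ℤ) := by push_cast; linarith
      _ ≤ _ := by exact_mod_cast this
  have hy : m • β + n • (1 : ℝ) = (n + α * (((k : ℤ) + 1) * m : ℤ) : ℝ) := by
    simp only [zsmul_eq_mul, β]
    push_cast
    ring
  rw [hy]
  exact int_add_mul_notMem_diophSet hC hξ hR

end diophSet

/-- For an irrational real `α`, the set `𝓝₁(α) = {λ ∈ ℝ : D(α, λ) fails}` is a dense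
`G_δ` subset of `ℝ`. -/
theorem stmt2 (α : ℝ) (hα : Irrational α) :
    Dense {x : ℝ | ¬ dioph1 (α : ℂ) (x : ℂ)} ∧ IsGδ {x : ℝ | ¬ dioph1 (α : ℂ) (x : ℂ)} := by
  have hopen (n : ℕ) : IsOpen (diophSet α ((n : ℝ) + 1)⁻¹ ((n : ℝ) + 1) ((n : ℝ) + 1))ᶜ :=
    (isClosed_diophSet _ _ _).isOpen_compl
  have hEq : {x : ℝ | ¬ dioph1 (α : ℂ) (x : ℂ)} =
      ⋂ n : ℕ, (diophSet α ((n : ℝ) + 1)⁻¹ ((n : ℝ) + 1) ((n : ℝ) + 1))ᶜ := by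
    rw [← Set.compl_iUnion, ← setOf_dioph1_eq_iUnion]
    rfl
  rw [hEq]
  exact ⟨dense_iInter_of_isOpen hopen fun n ↦ dense_compl_diophSet hα (by positivity) _ _,
    IsGδ.iInter_of_isOpen hopen⟩
end

section
/- Let α = p/q be rational, where p ∈ ℤ, q ∈ ℕ with q ≥ 1 and gcd(p,q) = 1 (with the convention p = 0, q = 1 when α = 0). Then 𝓜₁(α) = q⁻¹ℤ = {m/q : m ∈ ℤ}, viewed as a subset of ℂ; that is, for λ ∈ ℂ the condition D(p/q, λ) fails if and only if qλ ∈ ℤ. -/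
/-!
For `α = p/q` we have `τ + α ξ - λ = (qτ + pξ - qλ)/q`, and `qτ + pξ` ranges over all of `ℤ`.
If `qλ ∉ ℤ`, these values stay at distance at least `dist(qλ, ℤ)/q > 0` from `0`, so `D(α, λ)`
holds with any exponent. If `qλ = m ∈ ℤ`, Bézout gives a solution of `qτ + pξ = m`, and the
translates `(τ - pk, ξ + qk)` are zeros of the symbol of arbitrarily large size, so `D(α, λ)` fails.
-/

lemma dioph1_of_forall_le_norm {α lam : ℂ} {c : ℝ} (hc : 0 < c)
    (h : ∀ τ ξ : ℤ, c ≤ ‖(τ : ℂ) + α * (ξ : ℂ) - lam‖) : dioph1 α lam := by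
  refine ⟨c, hc, 1, one_pos, 1, one_pos, fun τ ξ hR => ?_⟩
  have hpow : (|(τ : ℝ)| + |(ξ : ℝ)|) ^ (-1 : ℝ) ≤ 1 :=
    Real.rpow_le_one_of_one_le_of_nonpos hR (by norm_num)
  calc c * (|(τ : ℝ)| + |(ξ : ℝ)|) ^ (-1 : ℝ) ≤ c * 1 := by gcongr
    _ = c := mul_one c
    _ ≤ _ := h τ ξ

lemma not_dioph1_of_unbounded_zeros {α lam : ℂ}
    (h : ∀ R : ℝ, ∃ τ ξ : ℤ, R ≤ |(τ : ℝ)| + |(ξ : ℝ)| ∧ (τ : ℂ) + α * ξ = lam) :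
    ¬ dioph1 α lam := by
  rintro ⟨C, hC, M, -, R, hR, hD⟩
  obtain ⟨τ, ξ, hτξ, hzero⟩ := h R
  have hle := hD τ ξ hτξ
  rw [hzero, sub_self, norm_zero] at hle
  have hsize : (0 : ℝ) < |(τ : ℝ)| + |(ξ : ℝ)| := hR.trans_le hτξ
  have : 0 < C * (|(τ : ℝ)| + |(ξ : ℝ)|) ^ (-M) := by positivity
  linarith

lemma exists_pos_forall_le_norm_intCast_sub {z : ℂ} (hz : z ∉ Set.range ((↑) : ℤ → ℂ)) :
    ∃ c > (0 : ℝ), ∀ n : ℤ, c ≤ ‖(n : ℂ) - z‖ := by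
  refine ⟨Metric.infDist z _,
    (Complex.isClosed_range_intCast.notMem_iff_infDist_pos ⟨0, 0, Int.cast_zero⟩).1 hz, fun n => ?_⟩
  rw [← dist_eq_norm, dist_comm]
  exact Metric.infDist_le_dist_of_mem ⟨n, rfl⟩

lemma exists_mul_add_mul_eq_of_isCoprime {p q : ℤ} (hpq : IsCoprime p q) (hq : 0 < q) (m : ℤ)
    (R : ℝ) : ∃ τ ξ : ℤ, R ≤ ξ ∧ q * τ + p * ξ = m := by
  obtain ⟨u, v, huv⟩ := hpq
  set k : ℤ := ⌈R⌉₊ + |m * u|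
  refine ⟨m * v - p * k, m * u + q * k, ?_, by linear_combination m * huv⟩
  have hk : ⌈R⌉₊ + |m * u| ≤ q * k := le_mul_of_one_le_left (by positivity) hq
  have : (⌈R⌉₊ : ℤ) ≤ m * u + q * k := by linarith [neg_abs_le (m * u)]
  calc R ≤ ⌈R⌉₊ := Nat.le_ceil R
    _ ≤ _ := by exact_mod_cast this

/-- For a rational coefficient `α = p/q` in lowest terms, `𝓜₁(α) = q⁻¹ℤ`:
`D(p/q, λ)` fails if and only if `λ = m/q` for some integer `m`. -/
theorem stmt3 (p : ℤ) (q : ℕ) (hq : 1 ≤ q) (hpq : Int.gcd p (q : ℤ) = 1) :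
    {lam : ℂ | ¬ dioph1 ((p : ℂ) / (q : ℂ)) lam} =
      {lam : ℂ | ∃ m : ℤ, lam = (m : ℂ) / (q : ℂ)} := by
  have hq0 : (q : ℂ) ≠ 0 := Nat.cast_ne_zero.mpr (by omega)
  have hsymbol : ∀ (τ ξ : ℤ) (lam : ℂ), (τ : ℂ) + p / q * ξ - lam
      = (((q * τ + p * ξ : ℤ) : ℂ) - q * lam) / q := by
    intro τ ξ lam
    field_simp
    push_cast
    ring
  ext lam
  refine ⟨fun hnd => ?_, ?_⟩
  · by_contra hm
    have hz : (q : ℂ) * lam ∉ Set.range ((↑) : ℤ → ℂ) := by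
      rintro ⟨m, hm'⟩
      exact hm ⟨m, by rw [eq_div_iff hq0, mul_comm, hm']⟩
    obtain ⟨c, hc, hcle⟩ := exists_pos_forall_le_norm_intCast_sub hz
    refine hnd (dioph1_of_forall_le_norm (c := c / q) (by positivity) fun τ ξ => ?_)
    rw [hsymbol, norm_div, Complex.norm_natCast]
    gcongr
    exact hcle _
  · rintro ⟨m, rfl⟩
    refine not_dioph1_of_unbounded_zeros fun R => ?_
    obtain ⟨τ, ξ, hR, hsol⟩ := exists_mul_add_mul_eq_of_isCoprime (Int.isCoprime_iff_gcd_eq_one.2 hpq)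
      (by omega) m R
    refine ⟨τ, ξ, hR.trans (by linarith [le_abs_self (ξ : ℝ), abs_nonneg (τ : ℝ)]),
      sub_eq_zero.1 ?_⟩
    rw [hsymbol, hsol, mul_div_cancel₀ _ hq0, sub_self, zero_div]
end

section
/- Let N ≥ 1 and α = (α₁,…,α_N) ∈ ℂ^N, and suppose the Diophantine condition D(α,0) holds. Then 𝓜_N(α) = 𝓜_{N,∞}(α) ∩ (ℤ + α₁ℤ + ⋯ + α_Nℤ)^c, i.e. λ ∈ ℂ satisfies D(α,λ) fails if and only if λ ∈ 𝓜_{N,∞}(α) and λ ∉ ℤ + α₁ℤ + ⋯ + α_Nℤ. -/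
open Finset

/-- The Diophantine condition `D(α, λ)` for `N` coefficients `α = (α₁, …, α_N)`. -/
def dioph {N : ℕ} (α : Fin N → ℂ) (lam : ℂ) : Prop :=
  ∃ C > (0 : ℝ), ∃ M > (0 : ℝ), ∃ R > (0 : ℝ),
    ∀ (τ : ℤ) (ξ : Fin N → ℤ), R ≤ (|τ| : ℝ) + ∑ j, (|ξ j| : ℝ) →
      C * (((|τ| : ℝ) + ∑ j, (|ξ j| : ℝ)) ^ (-M)) ≤
        ‖(τ : ℂ) + (∑ j, α j * (ξ j : ℂ)) - lam‖

/-- The `G_δ` set `𝓜_{N,∞}(α) = ⋂_j ⋃_{|(τ,ξ)| > 1} M(j, τ, ξ)`. -/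
def Minf {N : ℕ} (α : Fin N → ℂ) : Set ℂ :=
  ⋂ j : ℕ, ⋃ τ : ℤ, ⋃ ξ : Fin N → ℤ, ⋃ _ : 1 < (|τ| : ℝ) + ∑ i, (|ξ i| : ℝ),
    {lam : ℂ | ‖(τ : ℂ) + (∑ i, α i * (ξ i : ℂ)) - lam‖ <
      ((|τ| : ℝ) + ∑ i, (|ξ i| : ℝ)) ^ (-(j : ℝ))}

/-- The lattice `ℤ + α₁ℤ + ⋯ + α_Nℤ ⊂ ℂ`. -/
def latt {N : ℕ} (α : Fin N → ℂ) : Set ℂ :=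
  {z : ℂ | ∃ (n₀ : ℤ) (n : Fin N → ℤ), z = (n₀ : ℂ) + ∑ j, α j * (n j : ℂ)}

/-!
If `D(α, λ)` fails, taking `C = 1`, `M = j + 1`, `R = 2` produces exactly the approximations
defining `𝓜_{N,∞}(α)`. Translating `(τ, ξ)` by the coefficients of a lattice point changes the
height by a bounded amount, so `D(α, 0)` propagates to the whole lattice. Conversely, off the
lattice the finitely many points of height below `R` stay at positive distance from `λ`, so
`D(α, λ)` holds with `R = 1` after shrinking `C`; since heights above `1` are at least `2`, this
rules out approximations of order `height ^ (-j)` for `j` much larger than `M`.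
-/

namespace DiophantineSpectrum

variable {N : ℕ}

def height (τ : ℤ) (ξ : Fin N → ℤ) : ℝ := |(τ : ℝ)| + ∑ j, |(ξ j : ℝ)|

def point (α : Fin N → ℂ) (τ : ℤ) (ξ : Fin N → ℤ) : ℂ := τ + ∑ j, α j * ξ j

theorem dioph_iff {α : Fin N → ℂ} {lam : ℂ} :
    dioph α lam ↔ ∃ C > (0 : ℝ), ∃ M > (0 : ℝ), ∃ R > (0 : ℝ), ∀ τ ξ,
      R ≤ height τ ξ → C * height τ ξ ^ (-M) ≤ ‖point α τ ξ - lam‖ :=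
  Iff.rfl

theorem mem_Minf_iff {α : Fin N → ℂ} {lam : ℂ} :
    lam ∈ Minf α ↔ ∀ j : ℕ, ∃ τ ξ, 1 < height τ ξ ∧
      ‖point α τ ξ - lam‖ < height τ ξ ^ (-(j : ℝ)) := by
  simp only [Minf, Set.mem_iInter, Set.mem_iUnion, exists_prop]
  rfl

theorem mem_latt_iff {α : Fin N → ℂ} {z : ℂ} : z ∈ latt α ↔ ∃ τ ξ, point α τ ξ = z := by
  simp only [latt, Set.mem_ofPred_eq, point, eq_comm]

theorem height_nonneg (τ : ℤ) (ξ : Fin N → ℤ) : 0 ≤ height τ ξ := by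
  unfold height; positivity

theorem two_le_height_of_one_lt {τ : ℤ} {ξ : Fin N → ℤ} (h : 1 < height τ ξ) :
    2 ≤ height τ ξ := by
  have hcast : height τ ξ = ((|τ| + ∑ j, |ξ j| : ℤ) : ℝ) := by simp [height]
  rw [hcast] at h ⊢
  exact_mod_cast (show (1 : ℤ) < |τ| + ∑ j, |ξ j| by exact_mod_cast h)

theorem height_sub_le (τ σ : ℤ) (ξ η : Fin N → ℤ) :
    height (τ - σ) (ξ - η) ≤ height τ ξ + height σ η := by
  have hξ : ∑ j, |((ξ j - η j : ℤ) : ℝ)| ≤ ∑ j, (|(ξ j : ℝ)| + |(η j : ℝ)|) :=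
    sum_le_sum fun j _ => by push_cast; exact abs_sub _ _
  have hτ : |((τ - σ : ℤ) : ℝ)| ≤ |(τ : ℝ)| + |(σ : ℝ)| := by push_cast; exact abs_sub _ _
  simp only [height, Pi.sub_apply, sum_add_distrib] at hξ ⊢
  linarith

theorem height_neg (τ : ℤ) (ξ : Fin N → ℤ) : height (-τ) (-ξ) = height τ ξ := by
  simp [height]

theorem le_height_sub_add (τ σ : ℤ) (ξ η : Fin N → ℤ) :
    height τ ξ ≤ height (τ - σ) (ξ - η) + height σ η := by
  have h := height_sub_le (τ - σ) (-σ) (ξ - η) (-η)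
  rwa [sub_neg_eq_add, sub_neg_eq_add, sub_add_cancel, sub_add_cancel, height_neg] at h

theorem point_sub (α : Fin N → ℂ) (τ σ : ℤ) (ξ η : Fin N → ℤ) :
    point α (τ - σ) (ξ - η) = point α τ ξ - point α σ η := by
  simp only [point, Pi.sub_apply, Int.cast_sub, mul_sub, sum_sub_distrib]
  ring

theorem finite_setOf_height_le (B : ℝ) :
    {p : ℤ × (Fin N → ℤ) | height p.1 p.2 ≤ B}.Finite := by
  refine ((isCompact_closedBall (0 : ℤ × (Fin N → ℤ)) B).finite_of_discrete).subset ?_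
  rintro ⟨τ, ξ⟩ (h : height τ ξ ≤ B)
  have hsum : ∀ i, |(ξ i : ℝ)| ≤ ∑ j, |(ξ j : ℝ)| := fun i =>
    single_le_sum (f := fun j => |(ξ j : ℝ)|) (fun j _ => abs_nonneg _) (mem_univ i)
  have hτ : |(τ : ℝ)| ≤ height τ ξ := le_add_of_nonneg_right (by positivity)
  have hξ : ∀ i, |(ξ i : ℝ)| ≤ height τ ξ := fun i =>
    (hsum i).trans (le_add_of_nonneg_left (abs_nonneg _))
  rw [mem_closedBall_zero_iff, Prod.norm_def, max_le_iff, Int.norm_eq_abs,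
    pi_norm_le_iff_of_nonneg ((height_nonneg τ ξ).trans h)]
  exact ⟨hτ.trans h, fun i => (Int.norm_eq_abs _).trans_le ((hξ i).trans h)⟩

theorem exists_pos_le_dist_of_height_le {α : Fin N → ℂ} {lam : ℂ} (hl : lam ∉ latt α) (B : ℝ) :
    ∃ δ > (0 : ℝ), ∀ τ ξ, height τ ξ ≤ B → δ ≤ ‖point α τ ξ - lam‖ := by
  have hpos : ∀ p : ℤ × (Fin N → ℤ), 0 < ‖point α p.1 p.2 - lam‖ := fun p =>
    norm_pos_iff.2 (sub_ne_zero.2 fun h => hl (mem_latt_iff.2 ⟨p.1, p.2, h⟩))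
  have hev : ∀ᶠ δ in nhdsWithin (0 : ℝ) (Set.Ioi 0),
      ∀ p ∈ {p : ℤ × (Fin N → ℤ) | height p.1 p.2 ≤ B}, δ ≤ ‖point α p.1 p.2 - lam‖ :=
    (Filter.eventually_all_finite (finite_setOf_height_le B)).2 fun p _ =>
      nhdsWithin_le_nhds (eventually_le_nhds (hpos p))
  obtain ⟨δ, hδ, hδpos⟩ := (hev.and self_mem_nhdsWithin).exists
  exact ⟨δ, hδpos, fun τ ξ h => hδ (τ, ξ) h⟩

theorem dioph_add_of_mem_latt {α : Fin N → ℂ} {lam z : ℂ} (hd : dioph α lam)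
    (hz : z ∈ latt α) : dioph α (lam + z) := by
  obtain ⟨σ, η, rfl⟩ := mem_latt_iff.1 hz
  obtain ⟨C, hC, M, hM, R, hR, h⟩ := dioph_iff.1 hd
  refine dioph_iff.2 ⟨C * 2 ^ (-M), by positivity, M, hM, R + height σ η,
    by linarith [height_nonneg σ η], fun τ ξ hs => ?_⟩
  have hupper := height_sub_le τ σ ξ η
  have hlower := le_height_sub_add τ σ ξ η
  have hR' : R ≤ height (τ - σ) (ξ - η) := by linarith
  have hpos : 0 < height τ ξ := by linarith [height_nonneg σ η]
  calc C * 2 ^ (-M) * height τ ξ ^ (-M) = C * (2 * height τ ξ) ^ (-M) := by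
        rw [Real.mul_rpow zero_le_two hpos.le]; ring
    _ ≤ C * height (τ - σ) (ξ - η) ^ (-M) :=
        mul_le_mul_of_nonneg_left (Real.rpow_le_rpow_of_nonpos (hR.trans_le hR')
          (by linarith [height_nonneg σ η]) (by linarith)) hC.le
    _ ≤ ‖point α (τ - σ) (ξ - η) - lam‖ := h _ _ hR'
    _ = ‖point α τ ξ - (lam + point α σ η)‖ := by rw [point_sub, sub_sub, add_comm lam]

theorem mem_Minf_of_not_dioph {α : Fin N → ℂ} {lam : ℂ} (h : ¬ dioph α lam) : lam ∈ Minf α := by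
  refine mem_Minf_iff.2 fun j => ?_
  rw [dioph_iff] at h
  push Not at h
  obtain ⟨τ, ξ, hs, hlt⟩ := h 1 one_pos (j + 1) (by positivity) 2 two_pos
  refine ⟨τ, ξ, by linarith, ?_⟩
  rw [one_mul] at hlt
  exact hlt.trans_le (Real.rpow_le_rpow_of_exponent_le (by linarith) (by linarith))

theorem exists_forall_one_le_height_of_dioph {α : Fin N → ℂ} {lam : ℂ} (hd : dioph α lam)
    (hl : lam ∉ latt α) : ∃ C > (0 : ℝ), ∃ M : ℝ, ∀ τ ξ,
      1 ≤ height τ ξ → C * height τ ξ ^ (-M) ≤ ‖point α τ ξ - lam‖ := by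
  obtain ⟨C, hC, M, hM, R, -, h⟩ := dioph_iff.1 hd
  obtain ⟨δ, hδ, hδle⟩ := exists_pos_le_dist_of_height_le hl R
  refine ⟨min C δ, lt_min hC hδ, M, fun τ ξ h1 => ?_⟩
  rcases le_or_gt R (height τ ξ) with hR | hR
  · exact (mul_le_mul_of_nonneg_right (min_le_left _ _) (by positivity)).trans (h τ ξ hR)
  · calc min C δ * height τ ξ ^ (-M) ≤ δ * 1 :=
          mul_le_mul (min_le_right _ _) (Real.rpow_le_one_of_one_le_of_nonpos h1 (by linarith))
            (by positivity) hδ.le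
      _ ≤ ‖point α τ ξ - lam‖ := by rw [mul_one]; exact hδle τ ξ hR.le

theorem notMem_Minf_of_forall_le {α : Fin N → ℂ} {lam : ℂ} {C M : ℝ} (hC : 0 < C)
    (h : ∀ τ ξ, 1 ≤ height τ ξ → C * height τ ξ ^ (-M) ≤ ‖point α τ ξ - lam‖) :
    lam ∉ Minf α := by
  intro hmem
  obtain ⟨k, hk⟩ := exists_pow_lt_of_lt_one hC (by norm_num : (1 / 2 : ℝ) < 1)
  set j : ℕ := k + ⌈M⌉₊
  obtain ⟨τ, ξ, h1, hlt⟩ := mem_Minf_iff.1 hmem j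
  set s := height τ ξ
  have hs2 : 2 ≤ s := two_le_height_of_one_lt h1
  have hs : 0 < s := by linarith
  have hkj : (k : ℝ) ≤ j - M := by simp only [j]; push_cast; linarith [Nat.le_ceil M]
  have hdecay : s ^ (-(j : ℝ)) ≤ s ^ (-M) * (1 / 2) ^ k :=
    calc s ^ (-(j : ℝ)) = s ^ (-M) * s ^ (-(j - M)) := by rw [← Real.rpow_add hs]; ring_nf
      _ ≤ s ^ (-M) * 2 ^ (-(j - M)) :=
          mul_le_mul_of_nonneg_left (Real.rpow_le_rpow_of_nonpos two_pos hs2 (by linarith))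
            (by positivity)
      _ ≤ s ^ (-M) * 2 ^ (-(k : ℝ)) :=
          mul_le_mul_of_nonneg_left (Real.rpow_le_rpow_of_exponent_le one_le_two (by linarith))
            (by positivity)
      _ = s ^ (-M) * (1 / 2) ^ k := by
          rw [Real.rpow_neg zero_le_two, Real.rpow_natCast, one_div, inv_pow]
  have hCs : s ^ (-M) * C < s ^ (-M) * (1 / 2) ^ k := by
    rw [mul_comm]; exact (h τ ξ h1.le).trans_lt (hlt.trans_le hdecay)
  exact hk.not_gt (lt_of_mul_lt_mul_left hCs (Real.rpow_pos_of_pos hs _).le)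

end DiophantineSpectrum

open DiophantineSpectrum

theorem stmt5_general (N : ℕ) (α : Fin N → ℂ) (h0 : dioph α 0) :
    {lam : ℂ | ¬ dioph α lam} = Minf α ∩ (latt α)ᶜ := by
  ext lam
  simp only [Set.mem_ofPred_eq, Set.mem_inter_iff, Set.mem_compl_iff]
  refine ⟨fun h => ⟨mem_Minf_of_not_dioph h, fun hl => h ?_⟩, fun ⟨hm, hl⟩ hd => ?_⟩
  · simpa using dioph_add_of_mem_latt h0 hl
  · obtain ⟨C, hC, M, h⟩ := exists_forall_one_le_height_of_dioph hd hl
    exact notMem_Minf_of_forall_le hC h hm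

/-- If `L_N` is GH (i.e. `D(α, 0)` holds), then
`𝓜_N(α) = 𝓜_{N,∞}(α) ∩ (ℤ + α₁ℤ + ⋯ + α_Nℤ)ᶜ`. -/
theorem stmt5 (N : ℕ) (hN : 1 ≤ N) (α : Fin N → ℂ) (h0 : dioph α 0) :
    {lam : ℂ | ¬ dioph α lam} = Minf α ∩ (latt α)ᶜ :=
  stmt5_general N α h0
end

section
/- Let N ≥ 1 and α = (α₁,…,α_N) ∈ ℂ^N, and suppose the Diophantine condition D(α,0) fails. Then 𝓜_N(α) = 𝓜_{N,∞}(α). -/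
/-!
If `λ = τ₀ + α·ξ₀` is a point of the lattice `ℤ + α·ℤ^N`, translating by `(τ₀, ξ₀)` changes the
height `|τ| + ∑ |ξᵢ|` by a bounded amount, so the failure of `D(α, 0)` transfers to `D(α, λ)`.
Otherwise `λ` stays at positive distance from the finitely many lattice points of bounded
height; a point of `𝓜_{N,∞}(α)` is approximated to within `h^{-j}` by lattice points of height
`h ≥ 2` for every `j`, so these must eventually have large height, and then `h^{-j} ≤ C h^{-M}`
once `2^{M-j} ≤ C`. The inclusion `𝓜_N(α) ⊆ 𝓜_{N,∞}(α)` only needs the choice `C = 1`,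
`M = j + 1`.
-/

open Finset

section Lattice

variable {N : ℕ}

def latticeHeight (τ : ℤ) (ξ : Fin N → ℤ) : ℝ := |(τ : ℝ)| + ∑ i, |(ξ i : ℝ)|

def latticeValue (α : Fin N → ℂ) (τ : ℤ) (ξ : Fin N → ℤ) : ℂ := τ + ∑ i, α i * ξ i

lemma latticeHeight_nonneg (τ : ℤ) (ξ : Fin N → ℤ) : 0 ≤ latticeHeight τ ξ := by
  unfold latticeHeight; positivity

lemma two_le_latticeHeight {τ : ℤ} {ξ : Fin N → ℤ} (h : 1 < latticeHeight τ ξ) :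
    2 ≤ latticeHeight τ ξ := by
  have hcast : latticeHeight τ ξ = ((|τ| + ∑ i, |ξ i| : ℤ) : ℝ) := by
    simp [latticeHeight]
  rw [hcast] at h ⊢
  have h' : (1 : ℤ) < |τ| + ∑ i, |ξ i| := by exact_mod_cast h
  exact_mod_cast h'

lemma latticeHeight_add_le (τ τ' : ℤ) (ξ ξ' : Fin N → ℤ) :
    latticeHeight (τ + τ') (ξ + ξ') ≤ latticeHeight τ ξ + latticeHeight τ' ξ' := by
  simp only [latticeHeight, Pi.add_apply, Int.cast_add]
  have := Finset.sum_le_sum fun i (_ : i ∈ univ) => abs_add_le (ξ i : ℝ) (ξ' i)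
  rw [Finset.sum_add_distrib] at this
  linarith [abs_add_le (τ : ℝ) τ']

lemma latticeHeight_le_add (τ τ' : ℤ) (ξ ξ' : Fin N → ℤ) :
    latticeHeight τ ξ ≤ latticeHeight (τ + τ') (ξ + ξ') + latticeHeight τ' ξ' := by
  simpa [latticeHeight] using latticeHeight_add_le (τ + τ') (-τ') (ξ + ξ') (-ξ')

lemma latticeValue_add (α : Fin N → ℂ) (τ τ' : ℤ) (ξ ξ' : Fin N → ℤ) :
    latticeValue α (τ + τ') (ξ + ξ') = latticeValue α τ ξ + latticeValue α τ' ξ' := by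
  simp only [latticeValue, Pi.add_apply, Int.cast_add, mul_add, Finset.sum_add_distrib]
  ring

lemma finite_setOf_latticeHeight_le (K : ℝ) :
    {p : ℤ × (Fin N → ℤ) | latticeHeight p.1 p.2 ≤ K}.Finite := by
  refine (isCompact_closedBall 0 K).finite_of_discrete.subset fun ⟨τ, ξ⟩ hp => ?_
  have hτ : |(τ : ℝ)| ≤ latticeHeight τ ξ := by
    unfold latticeHeight; linarith [show 0 ≤ ∑ i, |(ξ i : ℝ)| by positivity]
  have hξ (i : Fin N) : |(ξ i : ℝ)| ≤ latticeHeight τ ξ := by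
    unfold latticeHeight
    linarith [abs_nonneg (τ : ℝ),
      Finset.single_le_sum (fun j _ => abs_nonneg (ξ j : ℝ)) (Finset.mem_univ i)]
  have hK : 0 ≤ K := (latticeHeight_nonneg τ ξ).trans hp
  rw [mem_closedBall_zero_iff, Prod.norm_def, max_le_iff, pi_norm_le_iff_of_nonneg hK]
  exact ⟨hτ.trans hp, fun i => (hξ i).trans hp⟩

lemma exists_pos_le_norm_latticeValue_sub (α : Fin N → ℂ) {lam : ℂ}
    (hlam : ∀ τ ξ, latticeValue α τ ξ ≠ lam) (K : ℝ) :
    ∃ ε > 0, ∀ τ ξ, latticeHeight τ ξ ≤ K → ε ≤ ‖latticeValue α τ ξ - lam‖ := by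
  have hclosed := ((finite_setOf_latticeHeight_le K).image
    fun p : ℤ × (Fin N → ℤ) => latticeValue α p.1 p.2).isClosed
  obtain ⟨ε, hε, hball⟩ :=
    Metric.isOpen_iff.mp hclosed.isOpen_compl lam fun ⟨p, _, hp⟩ => hlam p.1 p.2 hp
  refine ⟨ε, hε, fun τ ξ hK => ?_⟩
  by_contra! hlt
  exact hball (by rwa [Metric.mem_ball, dist_eq_norm]) ⟨(τ, ξ), hK, rfl⟩

lemma dioph_iff (α : Fin N → ℂ) (lam : ℂ) :
    dioph α lam ↔ ∃ C > (0 : ℝ), ∃ M > (0 : ℝ), ∃ R > (0 : ℝ), ∀ τ ξ,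
      R ≤ latticeHeight τ ξ →
        C * latticeHeight τ ξ ^ (-M) ≤ ‖latticeValue α τ ξ - lam‖ := by
  simp [dioph, latticeHeight, latticeValue]

lemma not_dioph_iff (α : Fin N → ℂ) (lam : ℂ) :
    ¬ dioph α lam ↔ ∀ C > (0 : ℝ), ∀ M > (0 : ℝ), ∀ R > (0 : ℝ), ∃ τ ξ,
      R ≤ latticeHeight τ ξ ∧
        ‖latticeValue α τ ξ - lam‖ < C * latticeHeight τ ξ ^ (-M) := by
  simp [dioph_iff]

lemma mem_Minf_iff (α : Fin N → ℂ) (lam : ℂ) :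
    lam ∈ Minf α ↔ ∀ j : ℕ, ∃ τ ξ,
      1 < latticeHeight τ ξ ∧ ‖latticeValue α τ ξ - lam‖ < latticeHeight τ ξ ^ (-(j : ℝ)) := by
  simp [Minf, latticeHeight, latticeValue]

lemma rpow_neg_le_two_rpow_sub_mul {s M t : ℝ} (hs : 2 ≤ s) (hMt : M ≤ t) :
    s ^ (-t) ≤ 2 ^ (M - t) * s ^ (-M) := by
  have hs0 : 0 < s := by linarith
  calc s ^ (-t) = s ^ (M - t) * s ^ (-M) := by rw [← Real.rpow_add hs0]; ring_nf
    _ ≤ 2 ^ (M - t) * s ^ (-M) := by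
      refine mul_le_mul_of_nonneg_right ?_ (by positivity)
      exact Real.rpow_le_rpow_of_nonpos two_pos hs (by linarith)

lemma mem_Minf_of_not_dioph {α : Fin N → ℂ} {lam : ℂ} (h : ¬ dioph α lam) : lam ∈ Minf α := by
  rw [mem_Minf_iff]
  intro j
  obtain ⟨τ, ξ, hR, hlt⟩ := (not_dioph_iff α lam).mp h 1 one_pos (j + 1) (by positivity) 2 two_pos
  refine ⟨τ, ξ, by linarith, hlt.trans_le ?_⟩
  rw [one_mul]
  exact Real.rpow_le_rpow_of_exponent_le (by linarith) (by linarith)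

lemma dioph_of_dioph_add_latticeValue {α : Fin N → ℂ} {lam : ℂ} (τ₀ : ℤ) (ξ₀ : Fin N → ℤ)
    (h : dioph α (lam + latticeValue α τ₀ ξ₀)) : dioph α lam := by
  obtain ⟨C, hC, M, hM, R, hR, hd⟩ := (dioph_iff α _).mp h
  set s := latticeHeight τ₀ ξ₀
  have hs : 0 ≤ s := latticeHeight_nonneg τ₀ ξ₀
  refine (dioph_iff α lam).mpr ⟨C * 2 ^ (-M), by positivity, M, hM, R + s, by positivity,
    fun τ ξ hRs => ?_⟩
  set t := latticeHeight τ ξ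
  have hshift_ge : R ≤ latticeHeight (τ + τ₀) (ξ + ξ₀) := by
    linarith [latticeHeight_le_add τ τ₀ ξ ξ₀]
  have hshift_le : latticeHeight (τ + τ₀) (ξ + ξ₀) ≤ 2 * t := by
    linarith [latticeHeight_add_le τ τ₀ ξ ξ₀]
  calc C * 2 ^ (-M) * t ^ (-M) = C * (2 * t) ^ (-M) := by
        rw [Real.mul_rpow zero_le_two (by linarith), mul_assoc]
    _ ≤ C * latticeHeight (τ + τ₀) (ξ + ξ₀) ^ (-M) := by
        refine mul_le_mul_of_nonneg_left ?_ hC.le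
        exact Real.rpow_le_rpow_of_nonpos (by linarith) hshift_le (by linarith)
    _ ≤ ‖latticeValue α τ ξ - lam‖ := by
        simpa [latticeValue_add] using hd _ _ hshift_ge

lemma not_dioph_of_mem_Minf {α : Fin N → ℂ} {lam : ℂ} (h : lam ∈ Minf α)
    (hlam : ∀ τ ξ, latticeValue α τ ξ ≠ lam) : ¬ dioph α lam := by
  rw [not_dioph_iff]
  intro C hC M hM R _
  obtain ⟨ε, hε, hfar⟩ := exists_pos_le_norm_latticeValue_sub α hlam R
  have htendsto : Filter.Tendsto (fun j : ℕ => (2 : ℝ) ^ (M - j)) Filter.atTop (nhds 0) := by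
    refine ((tendsto_const_nhds (x := (2 : ℝ) ^ M)).div_atTop
      (tendsto_pow_atTop_atTop_of_one_lt one_lt_two)).congr fun j => ?_
    rw [Real.rpow_sub two_pos, Real.rpow_natCast]
  obtain ⟨j, hjC, hjM⟩ := ((htendsto.eventually (gt_mem_nhds (lt_min hC hε))).and
    (Filter.eventually_ge_atTop ⌈M⌉₊)).exists
  obtain ⟨τ, ξ, hτξ, hlt⟩ := (mem_Minf_iff α lam).mp h j
  have hMj : M ≤ j := (Nat.le_ceil M).trans (by exact_mod_cast hjM)
  have happrox := hlt.trans_le (rpow_neg_le_two_rpow_sub_mul (two_le_latticeHeight hτξ) hMj)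
  have hclose : ‖latticeValue α τ ξ - lam‖ < ε :=
    calc ‖latticeValue α τ ξ - lam‖ < 2 ^ (M - j) * latticeHeight τ ξ ^ (-M) := happrox
      _ ≤ 2 ^ (M - j) := mul_le_of_le_one_right (by positivity)
          (Real.rpow_le_one_of_one_le_of_nonpos hτξ.le (by linarith))
      _ < ε := hjC.trans_le (min_le_right _ _)
  refine ⟨τ, ξ, ?_, happrox.trans_le ?_⟩
  · by_contra! hlow
    exact (hfar τ ξ hlow.le).not_gt hclose
  · gcongr
    exact hjC.le.trans (min_le_left _ _)

end Lattice

theorem stmt6_general (N : ℕ) (α : Fin N → ℂ) (h0 : ¬ dioph α 0) :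
    {lam : ℂ | ¬ dioph α lam} = Minf α := by
  ext lam
  refine ⟨mem_Minf_of_not_dioph, fun hlam => ?_⟩
  by_cases hlattice : ∀ τ ξ, latticeValue α τ ξ ≠ lam
  · exact not_dioph_of_mem_Minf hlam hlattice
  · obtain ⟨τ₀, ξ₀, rfl⟩ : ∃ τ ξ, latticeValue α τ ξ = lam := by simpa using hlattice
    exact fun hd => h0 (dioph_of_dioph_add_latticeValue τ₀ ξ₀ (by rwa [zero_add]))

/-- If `L_N` is not GH (i.e. `D(α, 0)` fails), then `𝓜_N(α) = 𝓜_{N,∞}(α)`. -/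
theorem stmt6 (N : ℕ) (hN : 1 ≤ N) (α : Fin N → ℂ) (h0 : ¬ dioph α 0) :
    {lam : ℂ | ¬ dioph α lam} = Minf α :=
  stmt6_general N α h0
end

section
/- Let N ≥ 2 and suppose all coefficients α₁,…,α_N are real, and that there exists k ∈ {1,…,N} with α_k irrational. Then 𝓜_N(α) is contained in ℝ and, viewed as a subset of ℝ, it is a dense G_δ subset of ℝ (in particular a comeager subset of ℝ). -/
/-!
Failure of `D(α, λ)` means that for every `n` some lattice point `(τ, ξ)` of height at least `n`
brings `τ + α·ξ` within `n⁻¹ · height^(-n)` of `λ`; each of these conditions defines an open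
set, so `𝓜_N(α)` is a `G_δ`. When `α` is real, `τ + α·ξ` is real, so a non-real `λ` stays at
distance `|Im λ|` from all of these values. For density, if `α_k` is irrational then the
numbers `τ + m n α_k` with `m ≠ 0` are dense in `ℝ`, and each of them is hit exactly by a
lattice point of height at least `n`; Baire's theorem concludes.
-/

open Finset

lemma dense_int_add_mul_of_irrational {γ : ℝ} (hγ : Irrational γ) :
    Dense {x : ℝ | ∃ τ m : ℤ, m ≠ 0 ∧ x = τ + m * γ} := by
  have hG : Dense (AddSubgroup.closure {γ, 1} : Set ℝ) :=
    dense_addSubgroupClosure_pair_iff.mpr (by simpa using hγ)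
  have hnonint : Dense (Set.range ((↑) : ℤ → ℝ))ᶜ :=
    dense_irrational.mono fun x hx ⟨m, hm⟩ => hx.ne_int m hm.symm
  refine (hG.inter_of_isOpen_right hnonint
    Int.isClosedEmbedding_coe_real.isClosed_range.isOpen_compl).mono ?_
  rintro x ⟨hxG, hxint⟩
  obtain ⟨m, τ, rfl⟩ := AddSubgroup.mem_closure_pair.mp hxG
  refine ⟨τ, m, ?_, by simp [zsmul_eq_mul, add_comm]⟩
  rintro rfl
  exact hxint ⟨τ, by simp⟩

namespace Dioph

variable {N : ℕ}

def latticeHeight (τ : ℤ) (ξ : Fin N → ℤ) : ℝ := (|τ| : ℝ) + ∑ j, (|ξ j| : ℝ)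

def linearForm (α : Fin N → ℂ) (τ : ℤ) (ξ : Fin N → ℤ) : ℂ := (τ : ℂ) + ∑ j, α j * (ξ j : ℂ)

lemma dioph_iff (α : Fin N → ℂ) (lam : ℂ) :
    dioph α lam ↔ ∃ C > (0 : ℝ), ∃ M > (0 : ℝ), ∃ R > (0 : ℝ), ∀ τ ξ,
      R ≤ latticeHeight τ ξ → C * latticeHeight τ ξ ^ (-M) ≤ ‖linearForm α τ ξ - lam‖ :=
  Iff.rfl

lemma latticeHeight_single (τ : ℤ) (k : Fin N) (z : ℤ) :
    latticeHeight τ (Pi.single k z) = |τ| + |z| := by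
  rw [latticeHeight, Fintype.sum_eq_single k fun j hj => by simp [Pi.single_eq_of_ne hj]]
  simp

lemma linearForm_single (α : Fin N → ℂ) (τ : ℤ) (k : Fin N) (z : ℤ) :
    linearForm α τ (Pi.single k z) = τ + α k * z := by
  rw [linearForm, Fintype.sum_eq_single k fun j hj => by simp [Pi.single_eq_of_ne hj]]
  simp

def approxSet (α : Fin N → ℂ) (n : ℕ) : Set ℂ :=
  {lam | ∃ τ ξ, n ≤ latticeHeight τ ξ ∧
    ‖linearForm α τ ξ - lam‖ < (n : ℝ)⁻¹ * latticeHeight τ ξ ^ (-(n : ℝ))}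

lemma isOpen_approxSet (α : Fin N → ℂ) (n : ℕ) : IsOpen (approxSet α n) := by
  simp only [approxSet, Set.ofPred_exists]
  exact isOpen_iUnion fun τ => isOpen_iUnion fun ξ =>
    isOpen_const.and (isOpen_lt (by fun_prop) continuous_const)

lemma not_dioph_iff_forall_mem_approxSet (α : Fin N → ℂ) (lam : ℂ) :
    ¬ dioph α lam ↔ ∀ n : ℕ, lam ∈ approxSet α (n + 1) := by
  rw [dioph_iff]
  constructor
  · intro h n
    by_contra hn
    refine h ⟨((n + 1 : ℕ) : ℝ)⁻¹, by positivity, (n + 1 : ℕ), by positivity, (n + 1 : ℕ),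
      by positivity, fun τ ξ hR => ?_⟩
    by_contra hlt
    exact hn ⟨τ, ξ, hR, not_le.mp hlt⟩
  · rintro h ⟨C, hC, M, -, R, -, hbound⟩
    obtain ⟨n, hn⟩ := exists_nat_ge (max (max C⁻¹ M) R)
    simp only [max_le_iff] at hn
    obtain ⟨⟨hCn, hMn⟩, hRn⟩ := hn
    obtain ⟨τ, ξ, hheight, hclose⟩ := h n
    push_cast at hheight hclose
    have hheight_one : 1 ≤ latticeHeight τ ξ := by linarith [n.cast_nonneg (α := ℝ)]
    have hcoeff : ((n : ℝ) + 1)⁻¹ ≤ C := inv_le_of_inv_le₀ hC (by linarith)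
    have hpow : latticeHeight τ ξ ^ (-((n : ℝ) + 1)) ≤ latticeHeight τ ξ ^ (-M) :=
      Real.rpow_le_rpow_of_exponent_le hheight_one (by linarith)
    have hfar := hbound τ ξ (by linarith)
    have hcompare := mul_le_mul hcoeff hpow (by positivity) hC.le
    linarith

lemma dioph_of_im_ne_zero {α : Fin N → ℂ} (hre : ∀ j, (α j).im = 0) {lam : ℂ}
    (hlam : lam.im ≠ 0) : dioph α lam := by
  refine (dioph_iff α lam).mpr ⟨|lam.im|, abs_pos.mpr hlam, 1, one_pos, 1, one_pos,
    fun τ ξ hR => ?_⟩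
  have him : (linearForm α τ ξ - lam).im = -lam.im := by
    simp [linearForm, Complex.im_sum, hre]
  calc |lam.im| * latticeHeight τ ξ ^ (-1 : ℝ)
      ≤ |lam.im| * 1 := by gcongr; exact Real.rpow_le_one_of_one_le_of_nonpos hR (by norm_num)
    _ = |(linearForm α τ ξ - lam).im| := by rw [him, abs_neg, mul_one]
    _ ≤ ‖linearForm α τ ξ - lam‖ := Complex.abs_im_le_norm _

lemma dense_preimage_ofReal_approxSet {α : Fin N → ℂ} (hre : ∀ j, (α j).im = 0) {k : Fin N}
    (hk : Irrational (α k).re) {n : ℕ} (hn : n ≠ 0) :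
    Dense ((↑) ⁻¹' approxSet α n : Set ℝ) := by
  refine (dense_int_add_mul_of_irrational (hk.natCast_mul hn)).mono ?_
  rintro _ ⟨τ, m, hm, rfl⟩
  have hheight : (n : ℝ) ≤ latticeHeight τ (Pi.single k (m * n)) := by
    have : (1 : ℝ) ≤ |(m : ℝ)| := by exact_mod_cast Int.one_le_abs hm
    rw [latticeHeight_single]
    push_cast
    rw [abs_mul, Nat.abs_cast]
    nlinarith [abs_nonneg (τ : ℝ), n.cast_nonneg (α := ℝ)]
  refine ⟨τ, Pi.single k (m * n), hheight, ?_⟩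
  have hexact : linearForm α τ (Pi.single k (m * n)) = ((τ + m * (n * (α k).re) : ℝ) : ℂ) := by
    rw [linearForm_single]
    apply Complex.ext <;> simp [hre k]
    ring
  rw [hexact, sub_self, norm_zero]
  have hn_pos : (0 : ℝ) < n := by positivity
  exact mul_pos (inv_pos.mpr hn_pos) (Real.rpow_pos_of_pos (hn_pos.trans_le hheight) _)

end Dioph

open Dioph in
theorem stmt8_general (N : ℕ) (α : Fin N → ℂ)
    (hre : ∀ j, (α j).im = 0) (k : Fin N) (hk : Irrational (α k).re) :
    {lam : ℂ | ¬ dioph α lam} ⊆ {z : ℂ | z.im = 0} ∧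
      Dense {x : ℝ | ¬ dioph α (x : ℂ)} ∧ IsGδ {x : ℝ | ¬ dioph α (x : ℂ)} := by
  have hset : {x : ℝ | ¬ dioph α (x : ℂ)} = ⋂ n : ℕ, (↑) ⁻¹' approxSet α (n + 1) := by
    ext x
    simp [not_dioph_iff_forall_mem_approxSet]
  have hopen (n : ℕ) : IsOpen ((↑) ⁻¹' approxSet α (n + 1) : Set ℝ) :=
    (isOpen_approxSet α _).preimage Complex.continuous_ofReal
  refine ⟨fun lam hlam => ?_, ?_, ?_⟩
  · by_contra him
    exact hlam (dioph_of_im_ne_zero hre him)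
  · rw [hset]
    exact dense_iInter_of_isOpen_nat hopen
      fun n => dense_preimage_ofReal_approxSet hre hk n.succ_ne_zero
  · rw [hset]
    exact IsGδ.iInter_of_isOpen hopen

/-- If all coefficients are real and at least one is irrational, then `𝓜_N(α)` is
contained in `ℝ` and, viewed as a subset of `ℝ`, it is a dense `G_δ`
(hence comeager) subset of `ℝ`. -/
theorem stmt8 (N : ℕ) (hN : 2 ≤ N) (α : Fin N → ℂ)
    (hre : ∀ j, (α j).im = 0) (k : Fin N) (hk : Irrational (α k).re) :
    {lam : ℂ | ¬ dioph α lam} ⊆ {z : ℂ | z.im = 0} ∧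
      Dense {x : ℝ | ¬ dioph α (x : ℂ)} ∧ IsGδ {x : ℝ | ¬ dioph α (x : ℂ)} :=
  stmt8_general N α hre k hk
end

section
/- Let N ≥ 2 and suppose each coefficient is rational: α_j = p_j/q_j with p_j ∈ ℤ, q_j ∈ ℕ, q_j ≥ 1, gcd(p_j,q_j) = 1 (with p_j = 0, q_j = 1 when α_j = 0). Set Q = q₁⋯q_N and Q_j = Q/q_j. Then 𝓜_N(α) = (d/Q)·ℤ, where d = gcd(Q, p₁Q₁, …, p_N Q_N); that is, for λ ∈ ℂ the condition D(α,λ) fails if and only if Qλ ∈ d·ℤ. -/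
/-!
Clearing denominators, `Q (τ + Σ αⱼ ξⱼ - λ) = (τ Q + Σ ξⱼ pⱼ Qⱼ) - Q λ`, and by Bézout the integers
`τ Q + Σ ξⱼ pⱼ Qⱼ` are exactly the multiples of `d`. If `Q λ ∉ dℤ`, the linear form therefore stays
at distance at least `dist(Qλ, dℤ) / Q > 0` from `λ`, and `D(α, λ)` holds with any exponent. If
`Q λ ∈ dℤ`, the linear form equals `λ` at some integer point, and adding multiples of the integer
relation `-pⱼQⱼ + αⱼ Q = 0` produces such points of arbitrarily large size, so `D(α, λ)` fails.
-/

open Finset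

lemma Int.exists_mul_add_sum_mul_eq_iff_dvd {ι : Type*} [Fintype ι] (b : ℤ) (a : ι → ℤ) (n : ℤ) :
    (∃ (τ : ℤ) (ξ : ι → ℤ), τ * b + ∑ j, ξ j * a j = n) ↔
      (Int.gcd b (univ.gcd a) : ℤ) ∣ n := by
  constructor
  · rintro ⟨τ, ξ, rfl⟩
    refine dvd_add ((Int.gcd_dvd_left _ _).mul_left τ) (dvd_sum fun j _ => ?_)
    exact ((Int.gcd_dvd_right _ _).trans (gcd_dvd (mem_univ j))).mul_left (ξ j)
  · rintro ⟨k, rfl⟩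
    obtain ⟨g, hg⟩ := univ.gcd_eq_sum_mul a
    refine ⟨Int.gcdA b (univ.gcd a) * k, fun j => g j * Int.gcdB b (univ.gcd a) * k, ?_⟩
    rw [Int.gcd_eq_gcd_ab, hg]
    simp only [add_mul, sum_mul]
    congr 1
    · ring
    · exact sum_congr rfl fun j _ => by ring

lemma Complex.exists_pos_le_norm_sub_intCast {z : ℂ} (hz : z ∉ Set.range ((↑) : ℤ → ℂ)) :
    ∃ δ > 0, ∀ k : ℤ, δ ≤ ‖z - k‖ :=
  ⟨Metric.infDist z _, (isClosed_range_intCast.notMem_iff_infDist_pos ⟨0, 0, Int.cast_zero⟩).1 hz,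
    fun k => (Metric.infDist_le_dist_of_mem (Set.mem_range_self k)).trans_eq (dist_eq_norm _ _)⟩

section Dioph

variable {N : ℕ} {α : Fin N → ℂ} {lam : ℂ}

lemma dioph_of_forall_le_norm {δ : ℝ} (hδ : 0 < δ)
    (h : ∀ (τ : ℤ) (ξ : Fin N → ℤ), δ ≤ ‖(τ : ℂ) + (∑ j, α j * (ξ j : ℂ)) - lam‖) :
    dioph α lam := by
  refine ⟨δ, hδ, 1, one_pos, 1, one_pos, fun τ ξ hS => ?_⟩
  calc δ * ((|τ| : ℝ) + ∑ j, (|ξ j| : ℝ)) ^ (-1 : ℝ)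
      ≤ δ * 1 := by gcongr; exact Real.rpow_le_one_of_one_le_of_nonpos hS (by norm_num)
    _ ≤ _ := (mul_one δ).trans_le (h τ ξ)

lemma not_dioph_of_forall_exists_eq
    (h : ∀ R : ℝ, ∃ (τ : ℤ) (ξ : Fin N → ℤ),
      R ≤ (|τ| : ℝ) + ∑ j, (|ξ j| : ℝ) ∧ (τ : ℂ) + ∑ j, α j * (ξ j : ℂ) = lam) :
    ¬ dioph α lam := by
  rintro ⟨C, hC, M, -, R, hR, hD⟩
  obtain ⟨τ, ξ, hRS, hsol⟩ := h R
  have hpos : 0 < C * ((|τ| : ℝ) + ∑ j, (|ξ j| : ℝ)) ^ (-M) :=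
    mul_pos hC (Real.rpow_pos_of_pos (hR.trans_le hRS) _)
  have := hD τ ξ hRS
  rw [hsol, sub_self, norm_zero] at this
  linarith

lemma exists_large_eq_of_mul_eq_intCast {j₀ : Fin N} {Q : ℕ} {a : ℤ} (hQ : Q ≠ 0)
    (hQa : (Q : ℂ) * α j₀ = a) (τ₀ : ℤ) (ξ₀ : Fin N → ℤ) (R : ℝ) :
    ∃ (τ : ℤ) (ξ : Fin N → ℤ), R ≤ (|τ| : ℝ) + ∑ j, (|ξ j| : ℝ) ∧
      (τ : ℂ) + ∑ j, α j * (ξ j : ℂ) = τ₀ + ∑ j, α j * (ξ₀ j : ℂ) := by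
  set t : ℕ := ⌈R⌉₊ + (ξ₀ j₀).natAbs
  refine ⟨τ₀ - a * t, fun j => ξ₀ j + if j = j₀ then (Q * t : ℤ) else 0, ?_, ?_⟩
  · have hlarge : (⌈R⌉₊ : ℤ) ≤ ξ₀ j₀ + Q * t := by
      have hQt : (t : ℤ) ≤ Q * t := le_mul_of_one_le_left (by positivity) (by omega)
      have hξ₀ : -(ξ₀ j₀) ≤ (ξ₀ j₀).natAbs := by omega
      push_cast [t] at hQt hξ₀ ⊢
      linarith
    calc R ≤ ((ξ₀ j₀ + Q * t : ℤ) : ℝ) := (Nat.le_ceil R).trans (by exact_mod_cast hlarge)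
      _ ≤ |((ξ₀ j₀ + Q * t : ℤ) : ℝ)| := le_abs_self _
      _ ≤ ∑ j, (|((ξ₀ j + if j = j₀ then (Q * t : ℤ) else 0 : ℤ) : ℝ)|) :=
        single_le_sum (f := fun j => |((ξ₀ j + if j = j₀ then (Q * t : ℤ) else 0 : ℤ) : ℝ)|)
          (fun j _ => abs_nonneg _) (mem_univ j₀) |>.trans_eq' (by simp)
      _ ≤ _ := le_add_of_nonneg_left (abs_nonneg _)
  · simp only [Int.cast_add, mul_add, sum_add_distrib, apply_ite (Int.cast : ℤ → ℂ),
      Int.cast_zero, mul_ite, mul_zero, sum_ite_eq', mem_univ, if_true]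
    push_cast
    linear_combination (t : ℂ) * hQa

lemma natCast_mul_add_sum_sub_eq {Q : ℕ} {a : Fin N → ℤ} (hQa : ∀ j, (Q : ℂ) * α j = a j)
    (τ : ℤ) (ξ : Fin N → ℤ) :
    (Q : ℂ) * ((τ : ℂ) + (∑ j, α j * (ξ j : ℂ)) - lam) =
      ((τ * Q + ∑ j, ξ j * a j : ℤ) : ℂ) - Q * lam := by
  push_cast
  simp only [mul_sub, mul_add, mul_sum, ← mul_assoc, hQa, mul_comm (ξ _ : ℂ)]
  ring

end Dioph

theorem not_dioph_iff_exists_mul_eq_gcd_mul {N : ℕ} [NeZero N] {α : Fin N → ℂ} {Q : ℕ}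
    (hQ : Q ≠ 0) {a : Fin N → ℤ} (hQa : ∀ j, (Q : ℂ) * α j = a j) (lam : ℂ) :
    ¬ dioph α lam ↔ ∃ m : ℤ, (Q : ℂ) * lam = (Int.gcd Q (univ.gcd a) : ℂ) * m := by
  set d := Int.gcd Q (univ.gcd a)
  constructor
  · intro hnot
    by_contra! hm
    refine hnot ?_
    have hd : d ≠ 0 := fun h => hQ (by exact_mod_cast (Int.gcd_eq_zero_iff.1 h).1)
    obtain ⟨δ, hδ, hδle⟩ := Complex.exists_pos_le_norm_sub_intCast (z := Q * lam / d) <| by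
      rintro ⟨k, hk⟩
      exact hm k (by rw [eq_div_iff (by exact_mod_cast hd)] at hk; rw [← hk, mul_comm])
    refine dioph_of_forall_le_norm (δ := d * δ / Q) (by positivity) fun τ ξ => ?_
    obtain ⟨k, hk⟩ := (Int.exists_mul_add_sum_mul_eq_iff_dvd _ a _).1 ⟨τ, ξ, rfl⟩
    rw [div_le_iff₀' (by positivity)]
    calc d * δ ≤ d * ‖Q * lam / d - k‖ := by gcongr; exact hδle k
      _ = ‖((d * k : ℤ) : ℂ) - Q * lam‖ := by
        rw [norm_sub_rev, ← Complex.norm_natCast d, ← norm_mul, mul_sub,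
          mul_div_cancel₀ _ (by exact_mod_cast hd)]
        push_cast
        rfl
      _ = Q * ‖(τ : ℂ) + (∑ j, α j * (ξ j : ℂ)) - lam‖ := by
        rw [← hk, ← natCast_mul_add_sum_sub_eq hQa, norm_mul, Complex.norm_natCast]
  · rintro ⟨m, hm⟩
    obtain ⟨τ₀, ξ₀, h₀⟩ := (Int.exists_mul_add_sum_mul_eq_iff_dvd _ a _).2 (dvd_mul_right (d : ℤ) m)
    have hsol : (τ₀ : ℂ) + ∑ j, α j * (ξ₀ j : ℂ) = lam := by
      have := natCast_mul_add_sum_sub_eq hQa τ₀ ξ₀ (lam := lam)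
      rw [h₀, hm] at this
      push_cast at this
      rw [sub_self, mul_eq_zero, sub_eq_zero] at this
      exact this.resolve_left (by exact_mod_cast hQ)
    refine not_dioph_of_forall_exists_eq fun R => ?_
    rw [← hsol]
    exact exists_large_eq_of_mul_eq_intCast hQ (hQa 0) τ₀ ξ₀ R

theorem stmt9_general (N : ℕ) (hN : 2 ≤ N) (α : Fin N → ℂ)
    (p : Fin N → ℤ) (q : Fin N → ℕ) (hq : ∀ j, 1 ≤ q j)
    (hα : ∀ j, α j = (p j : ℂ) / (q j : ℂ)) :
    {lam : ℂ | ¬ dioph α lam} =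
      {lam : ℂ | ∃ m : ℤ,
        ((∏ j, q j : ℕ) : ℂ) * lam =
          ((Int.gcd ((∏ j, q j : ℕ) : ℤ)
            (Finset.univ.gcd fun j => p j * ((∏ i ∈ Finset.univ.erase j, q i : ℕ) : ℤ)) : ℕ) : ℂ)
            * (m : ℂ)} := by
  ext lam
  have : NeZero N := ⟨by omega⟩
  have hq₀ : ∀ j, q j ≠ 0 := fun j => Nat.one_le_iff_ne_zero.1 (hq j)
  refine not_dioph_iff_exists_mul_eq_gcd_mul (prod_ne_zero_iff.2 fun j _ => hq₀ j) (fun j => ?_) lam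
  rw [hα j, ← mul_prod_erase univ q (mem_univ j)]
  have : (q j : ℂ) ≠ 0 := by exact_mod_cast hq₀ j
  push_cast
  field_simp

/-- If every coefficient is rational, `α_j = p_j / q_j` in lowest terms, then with
`Q = q₁⋯q_N`, `Q_j = Q/q_j` and `d = gcd(Q, p₁Q₁, …, p_N Q_N)` we have
`𝓜_N(α) = (d/Q)·ℤ`: `D(α, λ)` fails iff `Qλ ∈ dℤ`. -/
theorem stmt9 (N : ℕ) (hN : 2 ≤ N) (α : Fin N → ℂ)
    (p : Fin N → ℤ) (q : Fin N → ℕ) (hq : ∀ j, 1 ≤ q j)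
    (hgcd : ∀ j, Int.gcd (p j) ((q j : ℤ)) = 1)
    (hα : ∀ j, α j = (p j : ℂ) / (q j : ℂ)) :
    {lam : ℂ | ¬ dioph α lam} =
      {lam : ℂ | ∃ m : ℤ,
        ((∏ j, q j : ℕ) : ℂ) * lam =
          ((Int.gcd ((∏ j, q j : ℕ) : ℤ)
            (Finset.univ.gcd fun j => p j * ((∏ i ∈ Finset.univ.erase j, q i : ℕ) : ℤ)) : ℕ) : ℂ)
            * (m : ℂ)} :=
  stmt9_general N hN α p q hq hα
end

section
/- Let N ≥ 1 and α = (α₁,…,α_N) ∈ ℂ^N. The set 𝓜_{N,∞}(α) is dense in ℂ if and only if the additive subgroup ℤ + α₁ℤ + ⋯ + α_Nℤ = {n₀ + α₁n₁ + ⋯ + α_Nn_N : n₀,…,n_N ∈ ℤ} is dense in ℂ. -/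
open Finset

/-! Every point of `𝓜_{N,∞}(α)` lies within `2^{-j}` of a lattice point for every `j`, since a
lattice point of height `> 1` has integer height `≥ 2`; so `𝓜_{N,∞}(α) ⊆ closure (latt α)`.
Conversely each `𝓜_N(j)` is open and contains every lattice point of height `> 1`, which is all of
the lattice but finitely many points; if the lattice is dense, so is each `𝓜_N(j)`, and Baire's
theorem makes their intersection dense. -/

namespace Minf

variable {N : ℕ}

def latticePoint (α : Fin N → ℂ) (τ : ℤ) (ξ : Fin N → ℤ) : ℂ :=
  τ + ∑ i, α i * ξ i

def height (τ : ℤ) (ξ : Fin N → ℤ) : ℝ :=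
  (|τ| : ℝ) + ∑ i, (|ξ i| : ℝ)

lemma height_eq_intCast (τ : ℤ) (ξ : Fin N → ℤ) :
    height τ ξ = ((|τ| + ∑ i, |ξ i| : ℤ) : ℝ) := by
  push_cast; rfl

lemma two_le_height {τ : ℤ} {ξ : Fin N → ℤ} (h : 1 < height τ ξ) : 2 ≤ height τ ξ := by
  rw [height_eq_intCast] at h ⊢
  exact_mod_cast (Int.cast_lt.mp (by exact_mod_cast h) : (1 : ℤ) < _)

lemma height_rpow_neg_le {τ : ℤ} {ξ : Fin N → ℤ} (h : 1 < height τ ξ) (j : ℕ) :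
    height τ ξ ^ (-(j : ℝ)) ≤ (1 / 2) ^ j := by
  calc height τ ξ ^ (-(j : ℝ)) ≤ 2 ^ (-(j : ℝ)) :=
        Real.rpow_le_rpow_of_nonpos two_pos (two_le_height h) (by simp)
    _ = (1 / 2) ^ j := by rw [Real.rpow_neg zero_le_two, Real.rpow_natCast, one_div, inv_pow]

/-- `𝓜_N(j)`. -/
def level (α : Fin N → ℂ) (j : ℕ) : Set ℂ :=
  ⋃ τ : ℤ, ⋃ ξ : Fin N → ℤ, ⋃ _ : 1 < height τ ξ,
    Metric.ball (latticePoint α τ ξ) (height τ ξ ^ (-(j : ℝ)))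

lemma eq_iInter_level (α : Fin N → ℂ) : Minf α = ⋂ j, level α j := by
  ext lam
  simp only [Minf, level, latticePoint, height, Set.mem_iInter, Set.mem_iUnion, Set.mem_ofPred_eq,
    Metric.mem_ball, dist_comm lam, dist_eq_norm]

lemma isOpen_level (α : Fin N → ℂ) (j : ℕ) : IsOpen (level α j) :=
  isOpen_iUnion fun _ => isOpen_iUnion fun _ => isOpen_iUnion fun _ => Metric.isOpen_ball

lemma mem_latt_iff (α : Fin N → ℂ) (z : ℂ) : z ∈ latt α ↔ ∃ τ ξ, latticePoint α τ ξ = z := by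
  simp only [latt, latticePoint, Set.mem_ofPred_eq, eq_comm]

lemma finite_setOf_height_le_one :
    {p : ℤ × (Fin N → ℤ) | height p.1 p.2 ≤ 1}.Finite := by
  refine ((Set.finite_Icc (-1) 1).prod (Set.Finite.pi fun _ => Set.finite_Icc (-1) 1)).subset ?_
  rintro ⟨τ, ξ⟩ (h : height τ ξ ≤ 1)
  have hτ : |τ| ≤ 1 := by
    have : (|τ| : ℝ) ≤ 1 := by
      unfold height at h
      linarith [Finset.sum_nonneg fun i (_ : i ∈ univ) => (abs_nonneg (ξ i : ℝ))]
    exact_mod_cast this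
  have hξ (i : Fin N) : |ξ i| ≤ 1 := by
    have : (|ξ i| : ℝ) ≤ 1 := by
      unfold height at h
      linarith [abs_nonneg (τ : ℝ), Finset.single_le_sum
        (fun k (_ : k ∈ univ) => abs_nonneg (ξ k : ℝ)) (mem_univ i)]
    exact_mod_cast this
  exact ⟨abs_le.mp hτ, fun i _ => abs_le.mp (hξ i)⟩

lemma latt_diff_subset_level (α : Fin N → ℂ) (j : ℕ) :
    latt α \ (fun p : ℤ × (Fin N → ℤ) => latticePoint α p.1 p.2) '' {p | height p.1 p.2 ≤ 1} ⊆ level α j := by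
  rintro _ ⟨hz, hlow⟩
  obtain ⟨τ, ξ, rfl⟩ := (mem_latt_iff α _).mp hz
  have h : 1 < height τ ξ := not_le.mp fun h => hlow ⟨(τ, ξ), h, rfl⟩
  simp only [level, Set.mem_iUnion]
  exact ⟨τ, ξ, h, Metric.mem_ball_self (Real.rpow_pos_of_pos (one_pos.trans h) _)⟩

lemma dense_level {α : Fin N → ℂ} (h : Dense (latt α)) (j : ℕ) : Dense (level α j) :=
  (h.sdiff_finite (finite_setOf_height_le_one.image _)).mono (latt_diff_subset_level α j)

lemma subset_closure_latt (α : Fin N → ℂ) : Minf α ⊆ closure (latt α) := by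
  intro lam hlam
  rw [Metric.mem_closure_iff]
  intro ε hε
  obtain ⟨j, hj⟩ := exists_pow_lt_of_lt_one hε one_half_lt_one
  rw [eq_iInter_level, Set.mem_iInter] at hlam
  obtain ⟨τ, ξ, h, hball⟩ : ∃ τ ξ, 1 < height τ ξ ∧
      dist lam (latticePoint α τ ξ) < height τ ξ ^ (-(j : ℝ)) := by
    simpa only [level, Set.mem_iUnion, Metric.mem_ball, exists_prop] using hlam j
  exact ⟨_, (mem_latt_iff α _).mpr ⟨τ, ξ, rfl⟩,
    hball.trans_le ((height_rpow_neg_le h j).trans hj.le)⟩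

end Minf

theorem stmt10_general (N : ℕ) (α : Fin N → ℂ) :
    Dense (Minf α) ↔ Dense (latt α) := by
  constructor
  · intro h
    exact dense_closure.mp (h.mono (Minf.subset_closure_latt α))
  · intro h
    rw [Minf.eq_iInter_level]
    exact dense_iInter_of_isOpen (Minf.isOpen_level α) (Minf.dense_level h)

/-- `𝓜_{N,∞}(α)` is dense in `ℂ` iff `ℤ + α₁ℤ + ⋯ + α_Nℤ` is dense in `ℂ`. -/
theorem stmt10 (N : ℕ) (hN : 1 ≤ N) (α : Fin N → ℂ) :
    Dense (Minf α) ↔ Dense (latt α) :=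
  stmt10_general N α
end

section
/- Let N ≥ 2, α = (α₁,…,α_N) ∈ ℂ^N, and suppose there exists k ∈ {1,…,N} with Im α_k ≠ 0. Then 𝓜_N(α) is a dense G_δ subset of ℂ if and only if the only pair (r₁,r₂) ∈ ℚ² such that (r₁·(Re α_j · Im α_k − Re α_k · Im α_j) + r₂·Im α_j)/Im α_k ∈ ℚ for every j ∈ {1,…,N}\{k} is (r₁,r₂) = (0,0). -/
open Finset

/-!
`λ` violates `D(α, λ)` iff it is approximated to every order by values of `τ + ∑ αⱼ ξⱼ`; so
`𝓜_N(α)` is a countable intersection of open sets, each containing all but finitely many points of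
`Γ = ℤ + ∑ αⱼ ℤ`, and by Baire it is dense iff `Γ` is.

A subgroup `G ∋ 1` of `ℂ` is dense iff no nonzero real functional takes only integer values on `G`.
If `Im G` is dense in `ℝ`, reducing real parts modulo `1` gives arbitrarily small nonzero elements
of `G`, so the closure of `G` contains a line `ℝ u`; the functional vanishing on `u` has either
dense image, making `G` dense, or cyclic image, and then a rescaling of it is integral on `G`.
If `Im G` is cyclic, a rescaling of `Im` is integral on `G`.

A functional with `f 1 = r₁` and `f αₖ = r₂` takes the value
`(r₁ (Re αⱼ Im αₖ - Re αₖ Im αⱼ) + r₂ Im αⱼ) / Im αₖ` at `αⱼ`, and after clearing denominators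
rational values on the generators of `Γ` become integral.
-/

open Set Filter Topology Metric ComplexConjugate

theorem Rat.exists_nat_mul_eq_int {ι : Type*} [Fintype ι] (q : ι → ℚ) :
    ∃ D : ℕ, D ≠ 0 ∧ ∀ i, ∃ m : ℤ, (D * q i : ℚ) = m := by
  classical
  refine ⟨∏ i, (q i).den, prod_ne_zero_iff.2 fun i _ => (q i).den_ne_zero, fun i => ?_⟩
  obtain ⟨e, he⟩ := dvd_prod_of_mem (fun i => (q i).den) (mem_univ i)
  refine ⟨(q i).num * e, ?_⟩
  rw [he, Nat.cast_mul, mul_right_comm, mul_comm _ (q i), Rat.mul_den_eq_num, Int.cast_mul,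
    Int.cast_natCast]

theorem Complex.linearMap_eq_re_smul_add_im_smul {M : Type*} [AddCommGroup M] [Module ℝ M]
    (f : ℂ →ₗ[ℝ] M) (z : ℂ) : f z = z.re • f 1 + z.im • f I := by
  have hz : z = z.re • (1 : ℂ) + z.im • I := by simp
  conv_lhs => rw [hz]
  rw [map_add, map_smul, map_smul]

theorem Complex.eq_smul_of_im_conj_mul_eq_zero {u z : ℂ} (hu : u ≠ 0)
    (h : (conj u * z).im = 0) : z = ((conj u * z).re / normSq u) • u := by
  have hw : (((conj u * z).re : ℝ) : ℂ) = conj u * z := Complex.ext rfl (by simp [h])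
  have hn : (normSq u : ℂ) ≠ 0 := by exact_mod_cast normSq_eq_zero.not.2 hu
  rw [real_smul, ofReal_div, hw, div_mul_eq_mul_div, eq_div_iff hn, ← mul_conj]
  ring

theorem AddSubgroup.exists_ne_zero_le_zmultiples_of_not_dense {S : AddSubgroup ℝ}
    (hS : ¬ Dense (S : Set ℝ)) : ∃ a ≠ 0, S ≤ AddSubgroup.zmultiples a := by
  obtain ⟨a, rfl⟩ := S.dense_or_cyclic.resolve_left hS
  rcases eq_or_ne a 0 with rfl | ha
  · exact ⟨1, one_ne_zero, by simp⟩
  · exact ⟨a, ha, (AddSubgroup.zmultiples_eq_closure a).ge⟩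

theorem AddSubgroup.discreteTopology_of_forall_le_norm {E : Type*} [NormedAddCommGroup E]
    {G : AddSubgroup E} {ε : ℝ} (hε : 0 < ε)
    (hsep : ∀ g ∈ G, g ≠ 0 → ε ≤ ‖g‖) : DiscreteTopology G := by
  rw [discreteTopology_iff_isOpen_singleton_zero, isOpen_induced_iff]
  refine ⟨ball 0 ε, isOpen_ball, ?_⟩
  ext ⟨g, hg⟩
  simp only [Set.mem_preimage, mem_ball_zero_iff, mem_singleton_iff, Subtype.ext_iff,
    ZeroMemClass.coe_zero]
  exact ⟨not_imp_comm.1 (hsep g hg) ∘ not_le.2, fun h => h ▸ by simpa using hε⟩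

namespace AddSubgroup

variable {E : Type*} [NormedAddCommGroup E] [NormedSpace ℝ E]

def HasIntegralFunctional (G : AddSubgroup E) : Prop :=
  ∃ f : E →ₗ[ℝ] ℝ, f ≠ 0 ∧ ∀ z ∈ G, ∃ m : ℤ, f z = m

theorem HasIntegralFunctional.not_dense [FiniteDimensional ℝ E] {G : AddSubgroup E}
    (hG : G.HasIntegralFunctional) : ¬ Dense (G : Set E) := by
  obtain ⟨f, hf, hfG⟩ := hG
  intro hd
  have hint : _root_.closure (G : Set E) ⊆ f ⁻¹' range ((↑) : ℤ → ℝ) :=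
    closure_minimal (fun z hz => (hfG z hz).imp fun _ => Eq.symm)
      (Int.isClosedEmbedding_coe_real.isClosed_range.preimage f.continuous_of_finiteDimensional)
  obtain ⟨z, hz⟩ := LinearMap.surjective_of_ne_zero hf (1 / 2)
  obtain ⟨m, hm⟩ := hint (hd.closure_eq ▸ mem_univ z)
  rw [hz] at hm
  have : (2 * m : ℤ) = 1 := by exact_mod_cast (by linarith : (2 * m : ℝ) = 1)
  omega

theorem hasIntegralFunctional_of_not_dense_map (G : AddSubgroup E) {f : E →ₗ[ℝ] ℝ}
    (hf : f ≠ 0) (hGf : ¬ Dense (G.map f.toAddMonoidHom : Set ℝ)) :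
    G.HasIntegralFunctional := by
  obtain ⟨a, ha, hle⟩ := exists_ne_zero_le_zmultiples_of_not_dense hGf
  refine ⟨a⁻¹ • f, smul_ne_zero (inv_ne_zero ha) hf, fun z hz => ?_⟩
  obtain ⟨m, hm⟩ := mem_zmultiples_iff.1 (hle (mem_map_of_mem _ hz))
  refine ⟨m, ?_⟩
  simp only [LinearMap.toAddMonoidHom_coe] at hm
  rw [LinearMap.smul_apply, ← hm, zsmul_eq_mul, smul_eq_mul, mul_comm, mul_assoc,
    mul_inv_cancel₀ ha, mul_one]

theorem hasIntegralFunctional_of_ker_subset [FiniteDimensional ℝ E] {G : AddSubgroup E}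
    {f : E →ₗ[ℝ] ℝ} (hf : f ≠ 0) (hker : ∀ z, f z = 0 → z ∈ G.topologicalClosure)
    (hG : ¬ Dense (G : Set E)) : G.HasIntegralFunctional := by
  refine G.hasIntegralFunctional_of_not_dense_map hf fun hd => hG ?_
  -- the closure of `G` is invariant under `ker f`, hence contains the preimage of `f G`
  have hsub : f ⁻¹' (G.map f.toAddMonoidHom) ⊆ G.topologicalClosure := by
    rintro z ⟨g, hg, hgz⟩
    have hzg : z - g ∈ G.topologicalClosure := hker _ (by simp_all)
    rw [SetLike.mem_coe, ← sub_add_cancel z g]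
    exact add_mem hzg (G.le_topologicalClosure hg)
  rw [← dense_closure, ← topologicalClosure_coe]
  exact (hd.preimage (f.isOpenMap_of_finiteDimensional
    (LinearMap.surjective_of_ne_zero hf))).mono hsub

theorem exists_smul_mem_of_forall_exists_norm_lt [ProperSpace E] {H : AddSubgroup E}
    (hH : IsClosed (H : Set E)) (hsmall : ∀ ε > 0, ∃ h ∈ H, h ≠ 0 ∧ ‖h‖ < ε) :
    ∃ u ≠ 0, ∀ t : ℝ, t • u ∈ H := by
  choose h hH' hne hlt using fun n : ℕ => hsmall (1 / (n + 1)) Nat.one_div_pos_of_nat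
  set r := fun n => ‖h n‖
  have hr : Tendsto r atTop (𝓝 0) :=
    squeeze_zero (fun _ => norm_nonneg _) (fun n => (hlt n).le)
      tendsto_one_div_add_atTop_nhds_zero_nat
  have hdir : ∀ n, (r n)⁻¹ • h n ∈ sphere (0 : E) 1 := fun n => by
    simp [r, norm_smul, hne n]
  obtain ⟨u, hu, φ, hφ, hconv⟩ := (isCompact_sphere (0 : E) 1).tendsto_subseq hdir
  refine ⟨u, ne_zero_of_mem_unit_sphere ⟨u, hu⟩, fun t => ?_⟩
  -- `t • u` is the limit of the multiples `round (t / r n) • h n` along the subsequence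
  have hround : Tendsto (fun k => (round (t / r (φ k)) * r (φ k) : ℝ)) atTop (𝓝 t) := by
    have hr' := hr.comp hφ.tendsto_atTop
    rw [tendsto_iff_norm_sub_tendsto_zero]
    refine squeeze_zero (fun _ => norm_nonneg _) (fun k => ?_) (by simpa using hr'.div_const 2)
    have hrk : r (φ k) ≠ 0 := norm_ne_zero_iff.2 (hne _)
    calc ‖(round (t / r (φ k)) * r (φ k) : ℝ) - t‖
        = |t / r (φ k) - round (t / r (φ k))| * |r (φ k)| := by
          rw [Real.norm_eq_abs, ← abs_mul, abs_sub_comm, sub_mul, div_mul_cancel₀ _ hrk]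
      _ ≤ 1 / 2 * r (φ k) := by
          rw [abs_of_nonneg (norm_nonneg _)]
          exact mul_le_mul_of_nonneg_right (abs_sub_round _) (norm_nonneg _)
      _ = (r ∘ φ) k / 2 := by simp only [Function.comp]; ring
  refine hH.mem_of_tendsto (hround.smul hconv) (Eventually.of_forall fun k => ?_)
  have hrk : r (φ k) ≠ 0 := norm_ne_zero_iff.2 (hne _)
  simp only [Function.comp, smul_smul, mul_assoc, mul_inv_cancel₀ hrk, mul_one]
  exact_mod_cast zsmul_mem (hH' (φ k)) (round (t / r (φ k)))

theorem exists_ne_zero_norm_lt_of_dense_im (G : AddSubgroup ℂ) (h1 : (1 : ℂ) ∈ G)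
    (hB : Dense (G.map Complex.imLm.toAddMonoidHom : Set ℝ)) {ε : ℝ} (hε : 0 < ε) :
    ∃ g ∈ G, g ≠ 0 ∧ ‖g‖ < ε := by
  by_contra! hsep
  have := discreteTopology_of_forall_le_norm hε hsep
  have hfin : (closedBall (0 : ℂ) 2 ∩ G).Finite :=
    finite_isBounded_inter_isClosed (isDiscrete_iff_discreteTopology.2 this) isBounded_closedBall
      isClosed_of_discrete
  -- `Im` of the bounded part of `G` is finite, yet every `b ∈ Im G ∩ (0, 1)` is the imaginary
  -- part of an element of `G` with real part in `[0, 1)`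
  obtain ⟨b, ⟨hbB, hbF⟩, hb⟩ := (hB.sdiff_finite (hfin.image Complex.im)).exists_mem_open
    isOpen_Ioo (nonempty_Ioo.2 one_pos)
  obtain ⟨g, hg, rfl⟩ := mem_map.1 hbB
  refine hbF ⟨g - ⌊g.re⌋ • 1, ⟨?_, sub_mem hg (zsmul_mem h1 _)⟩, by simp⟩
  rw [mem_closedBall_zero_iff]
  refine (Complex.norm_le_abs_re_add_abs_im _).trans ?_
  have hre : |(g - ⌊g.re⌋ • 1).re| ≤ 1 := by
    have : (g - ⌊g.re⌋ • 1).re = Int.fract g.re := by simp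
    rw [this, abs_of_nonneg (Int.fract_nonneg _)]
    exact (Int.fract_lt_one _).le
  have him : |(g - ⌊g.re⌋ • 1).im| ≤ 1 := by
    simp only [LinearMap.toAddMonoidHom_coe, Complex.imLm_coe, Set.mem_Ioo] at hb
    simpa [abs_of_pos hb.1] using hb.2.le
  linarith

theorem hasIntegralFunctional_of_not_dense (G : AddSubgroup ℂ) (h1 : (1 : ℂ) ∈ G)
    (hG : ¬ Dense (G : Set ℂ)) : G.HasIntegralFunctional := by
  by_cases hB : Dense (G.map Complex.imLm.toAddMonoidHom : Set ℝ)
  · obtain ⟨u, hu, hline⟩ := exists_smul_mem_of_forall_exists_norm_lt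
      G.isClosed_topologicalClosure fun ε hε => (G.exists_ne_zero_norm_lt_of_dense_im h1 hB hε).imp
        fun g hg => ⟨G.le_topologicalClosure hg.1, hg.2⟩
    -- a functional vanishing exactly on the line `ℝ u`
    let f : ℂ →ₗ[ℝ] ℝ := Complex.imLm ∘ₗ LinearMap.mulLeft ℝ (conj u)
    have hf : f ≠ 0 := fun h => by
      simpa [f, ← Complex.normSq_apply, hu] using LinearMap.congr_fun h (Complex.I * u)
    refine hasIntegralFunctional_of_ker_subset hf (fun z hz => ?_) hG
    rw [Complex.eq_smul_of_im_conj_mul_eq_zero hu hz]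
    exact hline _
  · exact G.hasIntegralFunctional_of_not_dense_map
      (fun h => by simpa using LinearMap.congr_fun h Complex.I) hB

theorem dense_iff_not_hasIntegralFunctional (G : AddSubgroup ℂ) (h1 : (1 : ℂ) ∈ G) :
    Dense (G : Set ℂ) ↔ ¬ G.HasIntegralFunctional :=
  ⟨fun hd h => h.not_dense hd, not_imp_comm.1 (hasIntegralFunctional_of_not_dense G h1)⟩

end AddSubgroup

namespace DiophCondition

variable {N : ℕ} (α : Fin N → ℂ)

def linearForm : (ℤ × (Fin N → ℤ)) →+ ℂ where
  toFun p := p.1 + ∑ j, α j * p.2 j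
  map_zero' := by simp
  map_add' p q := by
    simp only [Prod.fst_add, Prod.snd_add, Pi.add_apply, Int.cast_add, mul_add, sum_add_distrib]
    ring

def l1Norm (p : ℤ × (Fin N → ℤ)) : ℕ := p.1.natAbs + ∑ j, (p.2 j).natAbs

theorem cast_l1Norm (p : ℤ × (Fin N → ℤ)) :
    (l1Norm p : ℝ) = |(p.1 : ℝ)| + ∑ j, |(p.2 j : ℝ)| := by
  simp [l1Norm, Nat.cast_natAbs]

theorem finite_setOf_l1Norm_le (n : ℕ) : {p : ℤ × (Fin N → ℤ) | l1Norm p ≤ n}.Finite := by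
  refine ((finite_Icc (-n : ℤ) n).prod (Set.Finite.pi fun _ => finite_Icc (-n : ℤ) n)).subset ?_
  intro p hp
  have hle : ∀ j, (p.2 j).natAbs ≤ n := fun j =>
    (single_le_sum (fun j _ => Nat.zero_le _) (mem_univ j)).trans (le_of_add_le_right hp)
  refine ⟨?_, fun j _ => ?_⟩
  · have : p.1.natAbs ≤ n := le_of_add_le_left hp
    simp only [Set.mem_Icc]; omega
  · have := hle j
    simp only [Set.mem_Icc]; omega

-- `λ ∈ approxSet α n` iff the inequality of `D(α, λ)` fails at some point for
-- `C = (n + 1)⁻¹` and `M = R = n + 1`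
def approxSet (n : ℕ) : Set ℂ :=
  ⋃ p ∈ {p | n + 1 ≤ l1Norm p},
    ball (linearForm α p) (((n : ℝ) + 1)⁻¹ * (l1Norm p : ℝ) ^ (-((n : ℝ) + 1)))

theorem isOpen_approxSet (n : ℕ) : IsOpen (approxSet α n) :=
  isOpen_biUnion fun _ _ => isOpen_ball

theorem mem_approxSet_iff {n : ℕ} {lam : ℂ} : lam ∈ approxSet α n ↔ ∃ p, n + 1 ≤ l1Norm p ∧
    ‖linearForm α p - lam‖ < ((n : ℝ) + 1)⁻¹ * (l1Norm p : ℝ) ^ (-((n : ℝ) + 1)) := by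
  simp only [approxSet, mem_iUnion₂, mem_ball', dist_eq_norm, exists_prop, Set.mem_ofPred_eq]

theorem mem_approxSet_of_not_dioph {lam : ℂ} (h : ¬ dioph α lam) (n : ℕ) : lam ∈ approxSet α n := by
  unfold dioph at h
  push Not at h
  obtain ⟨τ, ξ, hR, hlt⟩ := h ((n : ℝ) + 1)⁻¹ (by positivity) ((n : ℝ) + 1) (by positivity)
    ((n : ℝ) + 1) (by positivity)
  rw [← cast_l1Norm (τ, ξ)] at hR hlt
  exact (mem_approxSet_iff α).2 ⟨(τ, ξ), by exact_mod_cast hR, hlt⟩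

theorem not_dioph_of_forall_mem_approxSet {lam : ℂ} (h : ∀ n, lam ∈ approxSet α n) :
    ¬ dioph α lam := by
  rintro ⟨C, hC, M, hM, R, hR, hdioph⟩
  obtain ⟨n, hn⟩ := exists_nat_ge (max (max M R) C⁻¹)
  simp only [max_le_iff] at hn
  obtain ⟨p, hp, hlt⟩ := (mem_approxSet_iff α).1 (h n)
  have hp' : (n : ℝ) + 1 ≤ l1Norm p := by exact_mod_cast hp
  have hle := hdioph p.1 p.2 (by rw [← cast_l1Norm]; linarith)
  rw [← cast_l1Norm] at hle
  have hC' : ((n : ℝ) + 1)⁻¹ ≤ C := inv_le_of_inv_le₀ hC (by linarith)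
  have hpow : (l1Norm p : ℝ) ^ (-((n : ℝ) + 1)) ≤ (l1Norm p : ℝ) ^ (-M) :=
    Real.rpow_le_rpow_of_exponent_le (by linarith [(n.cast_nonneg : (0 : ℝ) ≤ n)]) (by linarith)
  have := mul_le_mul hC' hpow (by positivity) hC.le
  exact (hlt.trans_le this).not_ge hle

theorem setOf_not_dioph_eq : {lam | ¬ dioph α lam} = ⋂ n, approxSet α n := by
  ext lam
  rw [mem_iInter]
  exact ⟨mem_approxSet_of_not_dioph α, not_dioph_of_forall_mem_approxSet α⟩

theorem isGδ_setOf_not_dioph : IsGδ {lam | ¬ dioph α lam} := by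
  rw [setOf_not_dioph_eq]
  exact .iInter fun n => (isOpen_approxSet α n).isGδ

theorem setOf_not_dioph_subset_closure :
    {lam | ¬ dioph α lam} ⊆ closure (linearForm α).range := by
  intro lam hlam
  rw [Metric.mem_closure_iff]
  intro ε hε
  obtain ⟨n, hn⟩ := exists_nat_one_div_lt hε
  obtain ⟨p, hp, hlt⟩ := (mem_approxSet_iff α).1 (mem_approxSet_of_not_dioph α hlam n)
  have hp' : (1 : ℝ) ≤ l1Norm p := by exact_mod_cast (Nat.le_add_left 1 n).trans hp
  refine ⟨linearForm α p, ⟨p, rfl⟩, ?_⟩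
  rw [dist_comm, dist_eq_norm]
  calc ‖linearForm α p - lam‖ < ((n : ℝ) + 1)⁻¹ * (l1Norm p : ℝ) ^ (-((n : ℝ) + 1)) := hlt
    _ ≤ ((n : ℝ) + 1)⁻¹ * 1 := by
      gcongr
      exact Real.rpow_le_one_of_one_le_of_nonpos hp' (neg_nonpos.2 (by positivity))
    _ < ε := by simpa using hn

theorem dense_approxSet (hΓ : Dense ((linearForm α).range : Set ℂ)) (n : ℕ) :
    Dense (approxSet α n) := by
  -- only the finitely many values at points `p` with `l1Norm p ≤ n` may lie outside
  refine (hΓ.sdiff_finite ((finite_setOf_l1Norm_le n).image (linearForm α))).mono ?_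
  rintro _ ⟨⟨p, rfl⟩, hp⟩
  have hnp : n + 1 ≤ l1Norm p := by
    by_contra! h
    exact hp ⟨p, Nat.lt_succ_iff.1 h, rfl⟩
  have hp0 : (0 : ℝ) < l1Norm p := by exact_mod_cast (Nat.succ_pos n).trans_le hnp
  exact mem_iUnion₂.2 ⟨p, hnp, mem_ball_self (by positivity)⟩

theorem dense_setOf_not_dioph_iff :
    Dense {lam | ¬ dioph α lam} ↔ Dense ((linearForm α).range : Set ℂ) := by
  refine ⟨fun hd => dense_closure.1 (hd.mono (setOf_not_dioph_subset_closure α)), fun hΓ => ?_⟩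
  rw [setOf_not_dioph_eq]
  exact dense_iInter_of_isOpen (isOpen_approxSet α) (dense_approxSet α hΓ)

theorem one_mem_range_linearForm : (1 : ℂ) ∈ (linearForm α).range :=
  ⟨(1, 0), by simp [linearForm]⟩

theorem mem_range_linearForm (j : Fin N) : α j ∈ (linearForm α).range :=
  ⟨(0, Pi.single j 1), by simp [linearForm, Pi.single_apply]⟩

theorem range_linearForm_le {K : AddSubgroup ℂ} (h1 : (1 : ℂ) ∈ K) (hα : ∀ j, α j ∈ K) :
    (linearForm α).range ≤ K := by
  rintro _ ⟨p, rfl⟩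
  refine add_mem (by simpa using zsmul_mem h1 p.1) (sum_mem fun j _ => ?_)
  simpa [mul_comm] using zsmul_mem (hα j) (p.2 j)

def IsRationalPair (k : Fin N) (r₁ r₂ : ℚ) : Prop :=
  ∀ j, j ≠ k → ∃ s : ℚ,
    ((r₁ : ℝ) * ((α j).re * (α k).im - (α k).re * (α j).im) + (r₂ : ℝ) * (α j).im) / (α k).im
      = (s : ℝ)

theorem hasIntegralFunctional_of_rat_values {f : ℂ →ₗ[ℝ] ℝ} (hf : f ≠ 0) (q₀ : ℚ) (q : Fin N → ℚ)
    (h1 : f 1 = q₀) (hα : ∀ j, f (α j) = q j) : (linearForm α).range.HasIntegralFunctional := by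
  obtain ⟨D, hD, hDint⟩ := Rat.exists_nat_mul_eq_int fun o : Option (Fin N) => o.elim q₀ q
  refine ⟨(D : ℝ) • f, smul_ne_zero (by exact_mod_cast hD) hf, fun z hz => ?_⟩
  have hle : (linearForm α).range ≤
      (Int.castAddHom ℝ).range.comap ((D : ℝ) • f).toAddMonoidHom := by
    refine range_linearForm_le α ?_ fun j => ?_
    · obtain ⟨m, hm⟩ := hDint none
      exact ⟨m, by simpa [h1] using (Rat.cast_inj (α := ℝ)).2 hm.symm⟩
    · obtain ⟨m, hm⟩ := hDint (some j)
      exact ⟨m, by simpa [hα] using (Rat.cast_inj (α := ℝ)).2 hm.symm⟩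
  obtain ⟨m, hm⟩ := hle hz
  exact ⟨m, hm.symm⟩

theorem hasIntegralFunctional_of_isRationalPair {k : Fin N} (hk : (α k).im ≠ 0) {r₁ r₂ : ℚ}
    (hr : ¬(r₁ = 0 ∧ r₂ = 0)) (h : IsRationalPair α k r₁ r₂) :
    (linearForm α).range.HasIntegralFunctional := by
  -- the functional with `f 1 = r₁` and `f (α k) = r₂` takes the rational values `s` at `α j`
  set b := ((r₂ : ℝ) - r₁ * (α k).re) / (α k).im with hb
  let f : ℂ →ₗ[ℝ] ℝ := (r₁ : ℝ) • Complex.reLm + b • Complex.imLm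
  have hf : ∀ z, f z = r₁ * z.re + b * z.im := fun z => rfl
  have hf1 : f 1 = r₁ := by simp [hf]
  have hfk : f (α k) = r₂ := by rw [hf, hb]; field_simp; ring
  have hq : ∀ j, ∃ q : ℚ, f (α j) = q := by
    intro j
    rcases eq_or_ne j k with rfl | hj
    · exact ⟨r₂, hfk⟩
    · obtain ⟨s, hs⟩ := h j hj
      exact ⟨s, by rw [hf, hb, ← hs]; field_simp; ring⟩
  choose q hq using hq
  refine hasIntegralFunctional_of_rat_values α (fun h0 => hr ⟨?_, ?_⟩) r₁ q hf1 hq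
  · simpa [hf1] using LinearMap.congr_fun h0 1
  · simpa [hfk] using LinearMap.congr_fun h0 (α k)

theorem exists_isRationalPair_of_hasIntegralFunctional {k : Fin N} (hk : (α k).im ≠ 0)
    (h : (linearForm α).range.HasIntegralFunctional) :
    ∃ r₁ r₂ : ℚ, ¬(r₁ = 0 ∧ r₂ = 0) ∧ IsRationalPair α k r₁ r₂ := by
  obtain ⟨f, hf, hint⟩ := h
  obtain ⟨n₀, h₀⟩ := hint 1 (one_mem_range_linearForm α)
  choose m hm using fun j => hint (α j) (mem_range_linearForm α j)
  have hfα : ∀ j, f (α j) = (α j).re * n₀ + (α j).im * f Complex.I := fun j => by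
    rw [Complex.linearMap_eq_re_smul_add_im_smul, h₀, smul_eq_mul, smul_eq_mul]
  refine ⟨n₀, m k, fun ⟨h1, h2⟩ => hf ?_, fun j _ => ⟨m j, ?_⟩⟩
  · have hn₀ : (n₀ : ℝ) = 0 := by exact_mod_cast h1
    have hmk : (m k : ℝ) = 0 := by exact_mod_cast h2
    have hI : f Complex.I = 0 := by
      have hk0 : (α k).im * f Complex.I = 0 := by simpa [hm, hn₀, hmk] using (hfα k).symm
      exact (mul_eq_zero.1 hk0).resolve_left hk
    ext z
    simp [Complex.linearMap_eq_re_smul_add_im_smul f z, h₀, hn₀, hI]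
  · push_cast
    rw [← hm, ← hm, hfα, hfα]
    field_simp
    ring

end DiophCondition

theorem stmt11_general (N : ℕ) (α : Fin N → ℂ) (k : Fin N) (hk : (α k).im ≠ 0) :
    (Dense {lam : ℂ | ¬ dioph α lam} ∧ IsGδ {lam : ℂ | ¬ dioph α lam}) ↔
      (∀ r₁ r₂ : ℚ,
        (∀ j, j ≠ k → ∃ s : ℚ,
          ((r₁ : ℝ) * ((α j).re * (α k).im - (α k).re * (α j).im)
            + (r₂ : ℝ) * (α j).im) / (α k).im = (s : ℝ)) →
        r₁ = 0 ∧ r₂ = 0) := by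
  open DiophCondition in
  rw [dense_setOf_not_dioph_iff, AddSubgroup.dense_iff_not_hasIntegralFunctional _
    (one_mem_range_linearForm α)]
  refine ⟨fun ⟨hΓ, _⟩ r₁ r₂ hr => ?_, fun h => ⟨fun hΓ => ?_, isGδ_setOf_not_dioph α⟩⟩
  · by_contra hne
    exact hΓ (hasIntegralFunctional_of_isRationalPair α hk hne hr)
  · obtain ⟨r₁, r₂, hne, hr⟩ := exists_isRationalPair_of_hasIntegralFunctional α hk hΓ
    exact hne (h r₁ r₂ hr)

/-- Main theorem: if `Im α_k ≠ 0` for some `k`, then `𝓜_N(α)` is a dense `G_δ` subset of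
`ℂ` iff the only `(r₁, r₂) ∈ ℚ²` with
`(r₁ (Re α_j Im α_k − Re α_k Im α_j) + r₂ Im α_j) / Im α_k ∈ ℚ` for every `j ≠ k`
is `(0, 0)`. -/
theorem stmt11 (N : ℕ) (hN : 2 ≤ N) (α : Fin N → ℂ) (k : Fin N) (hk : (α k).im ≠ 0) :
    (Dense {lam : ℂ | ¬ dioph α lam} ∧ IsGδ {lam : ℂ | ¬ dioph α lam}) ↔
      (∀ r₁ r₂ : ℚ,
        (∀ j, j ≠ k → ∃ s : ℚ,
          ((r₁ : ℝ) * ((α j).re * (α k).im - (α k).re * (α j).im)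
            + (r₂ : ℝ) * (α j).im) / (α k).im = (s : ℝ)) →
        r₁ = 0 ∧ r₂ = 0) :=
  stmt11_general N α k hk
end

section
/- Let N = 2 and α₁, α₂ ∈ ℂ with Im α₁ ≠ 0. Then 𝓜₂(α₁,α₂) is a dense G_δ subset of ℂ if and only if the three real numbers 1, Re α₂ − Re α₁·(Im α₂/Im α₁), and Im α₂/Im α₁ are linearly independent over ℚ (equivalently over ℤ): the only rationals (r₀,r₁,r₂) with r₀ + r₁·(Re α₂ − Re α₁·Im α₂/Im α₁) + r₂·(Im α₂/Im α₁) = 0 are r₀ = r₁ = r₂ = 0. -/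
/-- The Diophantine condition `D((α₁, α₂), λ)` for two coefficients (`N = 2`). -/
def dioph2 (a b lam : ℂ) : Prop :=
  ∃ C > (0 : ℝ), ∃ M > (0 : ℝ), ∃ R > (0 : ℝ),
    ∀ τ ξ η : ℤ, R ≤ (|τ| : ℝ) + (|ξ| : ℝ) + (|η| : ℝ) →
      C * (((|τ| : ℝ) + (|ξ| : ℝ) + (|η| : ℝ)) ^ (-M)) ≤
        ‖(τ : ℂ) + a * (ξ : ℂ) + b * (η : ℂ) - lam‖

/-!
Write `β = Re α₂ - Re α₁ · Im α₂ / Im α₁` and `γ = Im α₂ / Im α₁`. In the real coordinates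
`(u, v) ↦ u + v α₁` of `ℂ` the lattice point `τ + α₁ ξ + α₂ η` is `(τ + β η, ξ + γ η)`.

If `1, β, γ` are independent over `ℚ`, these points are dense in `ℝ²` (Kronecker). Their closure
`A` is a closed subgroup which is not discrete (the fractional parts of `n (β, γ)` accumulate), so
it contains a line `ℝ u`; a functional vanishing on `u` sends the generators `(1, 0)`, `(0, 1)`,
`(β, γ)` onto a subgroup of `ℝ` that cannot be cyclic without an integer relation, hence is dense,
and then `A = ℝ²`. Now `𝓜₂` is the intersection over `n` of the open sets of points within
`(n + 1)⁻¹ S^-(n+1)` of a lattice point of size `S ≥ n + 1`; each of them is dense, and Baire's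
theorem applies.

Conversely, an integer relation `p₀ + p₁ β + p₂ γ = 0` with `(p₁, p₂) ≠ 0` makes the functional
`p₁ u + p₂ v` integer-valued on the lattice, so wherever it takes a value in `(1/4, 3/4)` the
Diophantine condition holds with exponent `1`: `𝓜₂` misses a nonempty open set.
-/

open Filter Topology Set

lemma Prod.exists_smul_eq_of_mul_sub_mul_eq_zero {u x : ℝ × ℝ} (hu : u ≠ 0)
    (h : u.2 * x.1 - u.1 * x.2 = 0) : ∃ t : ℝ, t • u = x := by
  have hn : u.1 ^ 2 + u.2 ^ 2 ≠ 0 := by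
    contrapose! hu
    ext <;> simp <;> nlinarith [sq_nonneg u.1, sq_nonneg u.2]
  refine ⟨(u.1 * x.1 + u.2 * x.2) / (u.1 ^ 2 + u.2 ^ 2), ?_⟩
  ext <;> simp only [Prod.smul_fst, Prod.smul_snd, smul_eq_mul] <;>
    rw [div_mul_eq_mul_div, div_eq_iff hn]
  · linear_combination -u.2 * h
  · linear_combination u.1 * h

namespace AddSubgroup

lemma exists_tendsto_zero_of_injective {E : Type*} [AddGroup E] [TopologicalSpace E]
    [IsTopologicalAddGroup E] [FirstCountableTopology E] (A : AddSubgroup E) {K : Set E}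
    (hK : IsCompact K) {p : ℕ → E} (hp : Function.Injective p) (hpA : ∀ n, p n ∈ A)
    (hpK : ∀ n, p n ∈ K) :
    ∃ a : ℕ → E, (∀ n, a n ∈ A) ∧ (∀ n, a n ≠ 0) ∧ Tendsto a atTop (𝓝 0) := by
  obtain ⟨q, -, φ, hφ, hlim⟩ := hK.tendsto_subseq hpK
  refine ⟨fun n => p (φ (n + 1)) - p (φ n), fun n => A.sub_mem (hpA _) (hpA _),
    fun n => sub_ne_zero.2 (hp.ne (hφ.injective.ne n.succ_ne_self)), ?_⟩
  simpa using (hlim.comp (tendsto_add_atTop_nat 1)).sub hlim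

lemma exists_ne_zero_forall_smul_mem {E : Type*} [NormedAddCommGroup E] [NormedSpace ℝ E]
    [ProperSpace E] (A : AddSubgroup E) (hA : IsClosed (A : Set E)) {a : ℕ → E}
    (haA : ∀ n, a n ∈ A) (ha0 : ∀ n, a n ≠ 0) (ha : Tendsto a atTop (𝓝 0)) :
    ∃ u ≠ (0 : E), ∀ t : ℝ, t • u ∈ A := by
  obtain ⟨u, hu, φ, hφ, hlim⟩ := (isCompact_sphere (0 : E) 1).tendsto_subseq
    (x := fun n => ‖a n‖⁻¹ • a n) fun n => by simp [norm_smul, ha0 n]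
  refine ⟨u, ne_zero_of_mem_unit_sphere ⟨u, hu⟩, fun t => ?_⟩
  set b : ℕ → E := fun n => ⌊t / ‖a (φ n)‖⌋ • a (φ n)
  have hdiff : ∀ n, ‖b n - t • (‖a (φ n)‖⁻¹ • a (φ n))‖ ≤ ‖a (φ n)‖ := by
    intro n
    have hsub : b n - t • (‖a (φ n)‖⁻¹ • a (φ n))
        = -Int.fract (t / ‖a (φ n)‖) • a (φ n) := by
      simp only [b, ← Int.cast_smul_eq_zsmul ℝ, smul_smul, Int.fract, ← sub_smul, neg_sub,
        div_eq_mul_inv]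
    rw [hsub, norm_smul, Real.norm_eq_abs, abs_neg, abs_of_nonneg (Int.fract_nonneg _)]
    exact mul_le_of_le_one_left (norm_nonneg _) (Int.fract_lt_one _).le
  have hb : Tendsto b atTop (𝓝 (t • u)) := by
    have h0 : Tendsto (fun n => b n - t • (‖a (φ n)‖⁻¹ • a (φ n))) atTop (𝓝 0) :=
      squeeze_zero_norm hdiff (tendsto_norm_zero.comp (ha.comp hφ.tendsto_atTop))
    simpa using h0.add (hlim.const_smul t)
  exact hA.mem_of_tendsto hb (Eventually.of_forall fun n => A.zsmul_mem (haA _) _)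

lemma eq_top_of_dense_image {E : Type*} [TopologicalSpace E] [AddCommGroup E] [Module ℝ E]
    [IsTopologicalAddGroup E] [ContinuousSMul ℝ E] (A : AddSubgroup E)
    (hA : IsClosed (A : Set E)) (f : E →ₗ[ℝ] ℝ) (hf : Function.Surjective f)
    (hker : ∀ x, f x = 0 → x ∈ A) (hdense : Dense (f '' A)) : A = ⊤ := by
  obtain ⟨w₀, hw₀⟩ := hf 1
  refine eq_top_iff.2 fun w _ => ?_
  set S : Set ℝ := {s | w - s • w₀ ∈ A}
  have hS : IsClosed S :=
    hA.preimage (continuous_const.sub (continuous_id.smul continuous_const))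
  have hdS : Dense S := by
    refine ((Homeomorph.subLeft (f w)).isDenseEmbedding.dense_image.2 hdense).mono ?_
    rintro _ ⟨_, ⟨x, hx, rfl⟩, rfl⟩
    have hk : w - x - (f w - f x) • w₀ ∈ A := hker _ (by simp [hw₀])
    show w - (f w - f x) • w₀ ∈ A
    convert A.add_mem hx hk using 1
    abel
  have h0 : (0 : ℝ) ∈ S := by
    rw [← hS.closure_eq, hdS.closure_eq]
    trivial
  simpa [S] using h0

lemma dense_of_mul_add_mul_mem {β γ : ℝ}
    (hind : ∀ q₀ q₁ q₂ : ℤ, (q₀ : ℝ) + q₁ * β + q₂ * γ = 0 → q₁ = 0 ∧ q₂ = 0)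
    (H : AddSubgroup ℝ) {a b : ℝ} (hab : ¬(a = 0 ∧ b = 0)) (ha : a ∈ H) (hb : b ∈ H)
    (habH : a * β + b * γ ∈ H) : Dense (H : Set ℝ) := by
  refine H.dense_or_cyclic.resolve_right ?_
  rintro ⟨c, rfl⟩
  simp only [mem_closure_singleton, zsmul_eq_mul] at ha hb habH
  obtain ⟨k₁, rfl⟩ := ha
  obtain ⟨k₂, rfl⟩ := hb
  obtain ⟨k₃, hk₃⟩ := habH
  apply hab
  rcases eq_or_ne c 0 with hc | hc
  · simp [hc]
  obtain ⟨rfl, rfl⟩ := hind (-k₃) k₁ k₂ <| mul_left_cancel₀ hc <| by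
    push_cast
    linear_combination -hk₃
  simp

end AddSubgroup

def kroneckerHom (β γ : ℝ) : ℤ × ℤ × ℤ →+ ℝ × ℝ :=
  AddMonoidHom.mk' (fun p => ((p.1 : ℝ) + β * p.2.2, (p.2.1 : ℝ) + γ * p.2.2)) fun p q => by
    ext <;> simp <;> ring

@[simp]
lemma kroneckerHom_apply (β γ : ℝ) (τ ξ η : ℤ) :
    kroneckerHom β γ (τ, ξ, η) = ((τ : ℝ) + β * η, (ξ : ℝ) + γ * η) := rfl

theorem dense_range_kroneckerHom {β γ : ℝ}
    (hind : ∀ q₀ q₁ q₂ : ℤ, (q₀ : ℝ) + q₁ * β + q₂ * γ = 0 → q₁ = 0 ∧ q₂ = 0) :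
    Dense (range (kroneckerHom β γ)) := by
  set A := (kroneckerHom β γ).range.topologicalClosure
  have hA : IsClosed (A : Set (ℝ × ℝ)) := AddSubgroup.isClosed_topologicalClosure _
  have hmem : ∀ τ ξ η : ℤ, ((τ : ℝ) + β * η, (ξ : ℝ) + γ * η) ∈ A := fun τ ξ η =>
    AddSubgroup.le_topologicalClosure _ ⟨(τ, ξ, η), rfl⟩
  have hinj : Function.Injective fun n : ℕ => (Int.fract (β * n), Int.fract (γ * n)) := by
    intro m n hmn
    have h := congrArg Prod.snd hmn
    simp only [Int.fract] at h
    have := (hind (⌊γ * m⌋ - ⌊γ * n⌋) 0 (n - m) (by push_cast; linear_combination -h)).2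
    omega
  obtain ⟨a, haA, ha0, ha⟩ := A.exists_tendsto_zero_of_injective
    (isCompact_Icc (a := ((0 : ℝ), (0 : ℝ))) (b := (1, 1))) hinj
    (fun n => by simpa [Int.fract, sub_eq_neg_add] using hmem (-⌊β * n⌋) (-⌊γ * n⌋) n)
    (fun n => ⟨⟨Int.fract_nonneg _, Int.fract_nonneg _⟩,
      ⟨(Int.fract_lt_one _).le, (Int.fract_lt_one _).le⟩⟩)
  obtain ⟨u, hu0, hu⟩ := A.exists_ne_zero_forall_smul_mem hA haA ha0 ha
  have hu12 : ¬(u.2 = 0 ∧ -u.1 = 0) := fun h => hu0 (Prod.ext (neg_eq_zero.1 h.2) h.1)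
  set f : ℝ × ℝ →ₗ[ℝ] ℝ := u.2 • LinearMap.fst ℝ ℝ ℝ - u.1 • LinearMap.snd ℝ ℝ ℝ
  have hf : ∀ x, f x = u.2 * x.1 - u.1 * x.2 := fun x => rfl
  have htop : A = ⊤ := by
    refine A.eq_top_of_dense_image hA f ?_ (fun x hx => ?_) ?_
    · refine LinearMap.surjective_of_ne_zero fun h => hu12 ⟨?_, ?_⟩
      · simpa [hf] using LinearMap.congr_fun h (1, 0)
      · simpa [hf] using LinearMap.congr_fun h (0, 1)
    · obtain ⟨t, rfl⟩ := Prod.exists_smul_eq_of_mul_sub_mul_eq_zero hu0 hx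
      exact hu t
    · refine AddSubgroup.dense_of_mul_add_mul_mem hind (A.map f.toAddMonoidHom) hu12
        ⟨_, hmem 1 0 0, by simp [hf]⟩ ⟨_, hmem 0 1 0, by simp [hf]⟩ ⟨_, hmem 0 0 1, ?_⟩
      simp only [Int.cast_zero, Int.cast_one, mul_one, zero_add, LinearMap.toAddMonoidHom_coe, hf,
        neg_mul]
      ring
  rw [dense_iff_closure_eq, ← AddMonoidHom.coe_range, ← AddSubgroup.topologicalClosure_coe]
  exact congrArg _ htop

lemma dioph2_of_forall_le_norm {a b lam : ℂ} {c : ℝ} (hc : 0 < c)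
    (h : ∀ τ ξ η : ℤ, c ≤ ‖(τ : ℂ) + a * ξ + b * η - lam‖) : dioph2 a b lam :=
  ⟨c, hc, 1, one_pos, 1, one_pos, fun τ ξ η hS =>
    (mul_le_of_le_one_right hc.le (Real.rpow_le_one_of_one_le_of_nonpos hS (by norm_num))).trans
      (h τ ξ η)⟩

lemma quarter_le_abs_intCast_sub {x : ℝ} (hx : x ∈ Ioo (1 / 4 : ℝ) (3 / 4)) (k : ℤ) :
    1 / 4 ≤ |(k : ℝ) - x| := by
  rcases le_or_gt k 0 with hk | hk
  · have : (k : ℝ) ≤ 0 := by exact_mod_cast hk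
    rw [abs_sub_comm, le_abs]
    left
    linarith [hx.1]
  · have : (1 : ℝ) ≤ k := by exact_mod_cast hk
    rw [le_abs]
    left
    linarith [hx.2]

lemma dioph2_of_map_eq_intCast {a b lam : ℂ} (Φ : ℂ →L[ℝ] ℝ)
    (hΦ : ∀ τ ξ η : ℤ, ∃ k : ℤ, Φ ((τ : ℂ) + a * ξ + b * η) = k)
    (hlam : Φ lam ∈ Ioo (1 / 4 : ℝ) (3 / 4)) : dioph2 a b lam := by
  have key : ∀ τ ξ η : ℤ, 1 / 4 ≤ ‖Φ‖ * ‖(τ : ℂ) + a * ξ + b * η - lam‖ := by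
    intro τ ξ η
    obtain ⟨k, hk⟩ := hΦ τ ξ η
    calc (1 / 4 : ℝ) ≤ |(k : ℝ) - Φ lam| := quarter_le_abs_intCast_sub hlam k
      _ = ‖Φ ((τ : ℂ) + a * ξ + b * η - lam)‖ := by rw [map_sub, hk, Real.norm_eq_abs]
      _ ≤ _ := Φ.le_opNorm _
  have hΦ0 : 0 < ‖Φ‖ := (norm_nonneg Φ).lt_of_ne fun h => by
    have := key 0 0 0
    rw [← h, zero_mul] at this
    norm_num at this
  refine dioph2_of_forall_le_norm (c := 1 / (4 * ‖Φ‖)) (by positivity) fun τ ξ η => ?_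
  rw [div_le_iff₀ (by positivity)]
  linarith [key τ ξ η]

lemma not_dense_setOf_not_dioph2 {a b : ℂ} (Φ : ℂ →L[ℝ] ℝ) (hsurj : Function.Surjective Φ)
    (hΦ : ∀ τ ξ η : ℤ, ∃ k : ℤ, Φ ((τ : ℂ) + a * ξ + b * η) = k) :
    ¬ Dense {lam : ℂ | ¬ dioph2 a b lam} := by
  intro hd
  obtain ⟨z, hz⟩ := hsurj (1 / 2)
  obtain ⟨lam, hlam, hmem⟩ := hd.exists_mem_open
    ((isOpen_Ioo (a := (1 / 4 : ℝ)) (b := 3 / 4)).preimage Φ.continuous)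
    ⟨z, by norm_num [hz]⟩
  exact hlam (dioph2_of_map_eq_intCast Φ hΦ hmem)

def approxSet (a b : ℂ) (n : ℕ) : Set ℂ :=
  ⋃ (τ : ℤ) (ξ : ℤ) (η : ℤ) (_ : (n : ℝ) + 1 ≤ (|τ| : ℝ) + (|ξ| : ℝ) + (|η| : ℝ)),
    Metric.ball ((τ : ℂ) + a * ξ + b * η)
      ((n + 1 : ℝ)⁻¹ * ((|τ| : ℝ) + (|ξ| : ℝ) + (|η| : ℝ)) ^ (-(n + 1 : ℝ)))

lemma isOpen_approxSet (a b : ℂ) (n : ℕ) : IsOpen (approxSet a b n) :=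
  isOpen_iUnion fun _ => isOpen_iUnion fun _ => isOpen_iUnion fun _ =>
    isOpen_iUnion fun _ => Metric.isOpen_ball

lemma mem_approxSet {a b lam : ℂ} {n : ℕ} :
    lam ∈ approxSet a b n ↔ ∃ τ ξ η : ℤ, (n : ℝ) + 1 ≤ (|τ| : ℝ) + (|ξ| : ℝ) + (|η| : ℝ) ∧
      ‖(τ : ℂ) + a * ξ + b * η - lam‖
        < (n + 1 : ℝ)⁻¹ * ((|τ| : ℝ) + (|ξ| : ℝ) + (|η| : ℝ)) ^ (-(n + 1 : ℝ)) := by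
  simp [approxSet, dist_eq_norm, norm_sub_rev]

lemma not_dioph2_iff {a b lam : ℂ} : ¬ dioph2 a b lam ↔ ∀ n, lam ∈ approxSet a b n := by
  constructor
  · intro h n
    by_contra hn
    simp only [mem_approxSet, not_exists, not_and, not_lt] at hn
    exact h ⟨(n + 1 : ℝ)⁻¹, by positivity, n + 1, by positivity, n + 1, by positivity, hn⟩
  · rintro h ⟨C, hC, M, -, R, -, hCMR⟩
    obtain ⟨n, hn⟩ := exists_nat_ge (max (max C⁻¹ M) R)
    simp only [max_le_iff] at hn
    obtain ⟨τ, ξ, η, hS, hlt⟩ := mem_approxSet.1 (h n)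
    have hC' : (n + 1 : ℝ)⁻¹ ≤ C := inv_le_of_inv_le₀ hC (by linarith)
    have hM' : ((|τ| : ℝ) + (|ξ| : ℝ) + (|η| : ℝ)) ^ (-(n + 1 : ℝ))
        ≤ ((|τ| : ℝ) + (|ξ| : ℝ) + (|η| : ℝ)) ^ (-M) :=
      Real.rpow_le_rpow_of_exponent_le (by linarith [n.cast_nonneg (α := ℝ)]) (by linarith)
    exact (hCMR τ ξ η (by linarith)).not_gt
      (hlt.trans_le (mul_le_mul hC' hM' (by positivity) hC.le))

lemma setOf_not_dioph2_eq_iInter (a b : ℂ) :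
    {lam : ℂ | ¬ dioph2 a b lam} = ⋂ n, approxSet a b n := by
  ext lam
  simp [not_dioph2_iff]

lemma isGδ_setOf_not_dioph2 (a b : ℂ) : IsGδ {lam : ℂ | ¬ dioph2 a b lam} := by
  rw [setOf_not_dioph2_eq_iInter]
  exact .iInter_of_isOpen (isOpen_approxSet a b)

lemma dense_approxSet {a b : ℂ}
    (hd : Dense (range fun p : ℤ × ℤ × ℤ => (p.1 : ℂ) + a * p.2.1 + b * p.2.2)) (n : ℕ) :
    Dense (approxSet a b n) := by
  have hI : (Icc (-(n + 1 : ℤ)) (n + 1)).Finite := finite_Icc _ _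
  have hIcc : ∀ x : ℤ, (|x| : ℝ) < n + 1 → x ∈ Icc (-(n + 1 : ℤ)) (n + 1) := fun x hx =>
    abs_le.1 (by exact_mod_cast hx.le)
  have hfin : {p : ℤ × ℤ × ℤ | (|p.1| : ℝ) + (|p.2.1| : ℝ) + (|p.2.2| : ℝ) < n + 1}.Finite := by
    refine (hI.prod (hI.prod hI)).subset ?_
    rintro ⟨τ, ξ, η⟩ (hp : (|τ| : ℝ) + (|ξ| : ℝ) + (|η| : ℝ) < n + 1)
    have := abs_nonneg (τ : ℝ)
    have := abs_nonneg (ξ : ℝ)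
    have := abs_nonneg (η : ℝ)
    exact ⟨hIcc τ (by linarith), hIcc ξ (by linarith), hIcc η (by linarith)⟩
  refine (hd.sdiff_finite (hfin.image fun p => (p.1 : ℂ) + a * p.2.1 + b * p.2.2)).mono ?_
  rintro _ ⟨⟨⟨τ, ξ, η⟩, rfl⟩, hlarge⟩
  have hS : (n : ℝ) + 1 ≤ (|τ| : ℝ) + (|ξ| : ℝ) + (|η| : ℝ) :=
    not_lt.1 fun h => hlarge ⟨_, h, rfl⟩
  refine mem_approxSet.2 ⟨τ, ξ, η, hS, ?_⟩
  rw [sub_self, norm_zero]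
  have := hS.trans_lt' (by positivity)
  positivity

lemma dense_setOf_not_dioph2 {a b : ℂ}
    (hd : Dense (range fun p : ℤ × ℤ × ℤ => (p.1 : ℂ) + a * p.2.1 + b * p.2.2)) :
    Dense {lam : ℂ | ¬ dioph2 a b lam} := by
  rw [setOf_not_dioph2_eq_iInter]
  exact dense_iInter_of_isOpen (isOpen_approxSet a b) (dense_approxSet hd)

noncomputable def oneAlphaEquiv (α : ℂ) (h : α.im ≠ 0) : (ℝ × ℝ) ≃L[ℝ] ℂ :=
  LinearEquiv.toContinuousLinearEquiv
    ({ toFun := fun w : ℝ × ℝ => (w.1 : ℂ) + w.2 * α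
       invFun := fun z => (z.re - α.re * (z.im / α.im), z.im / α.im)
       map_add' := fun w w' => by
         simp only [Prod.fst_add, Prod.snd_add, Complex.ofReal_add]; ring
       map_smul' := fun c w => by
         simp only [Prod.smul_fst, Prod.smul_snd, smul_eq_mul, Complex.ofReal_mul,
           RingHom.id_apply, Complex.real_smul]; ring
       left_inv := fun w => by ext <;> simp [field]
       right_inv := fun z => by apply Complex.ext <;> simp [field] } :
      (ℝ × ℝ) ≃ₗ[ℝ] ℂ)

lemma oneAlphaEquiv_kroneckerHom {α₁ α₂ : ℂ} (h1 : α₁.im ≠ 0) (p : ℤ × ℤ × ℤ) :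
    oneAlphaEquiv α₁ h1 (kroneckerHom (α₂.re - α₁.re * (α₂.im / α₁.im)) (α₂.im / α₁.im) p)
      = (p.1 : ℂ) + α₁ * p.2.1 + α₂ * p.2.2 := by
  have hα₂ : ((α₂.re - α₁.re * (α₂.im / α₁.im) : ℝ) : ℂ) + ((α₂.im / α₁.im : ℝ) : ℂ) * α₁ = α₂ :=
    by
    apply Complex.ext <;> simp [field]
  obtain ⟨τ, ξ, η⟩ := p
  change (((τ : ℝ) + _ * η : ℝ) : ℂ) + (((ξ : ℝ) + _ * η : ℝ) : ℂ) * α₁ = _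
  simp only [Complex.ofReal_add, Complex.ofReal_mul, Complex.ofReal_intCast]
  linear_combination (η : ℂ) * hα₂

lemma dense_range_lattice {α₁ α₂ : ℂ} (h1 : α₁.im ≠ 0)
    (hind : ∀ q₀ q₁ q₂ : ℤ, (q₀ : ℝ) + q₁ * (α₂.re - α₁.re * (α₂.im / α₁.im))
      + q₂ * (α₂.im / α₁.im) = 0 → q₁ = 0 ∧ q₂ = 0) :
    Dense (range fun p : ℤ × ℤ × ℤ => (p.1 : ℂ) + α₁ * p.2.1 + α₂ * p.2.2) := by
  have hcomp : (fun p : ℤ × ℤ × ℤ => (p.1 : ℂ) + α₁ * p.2.1 + α₂ * p.2.2)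
      = oneAlphaEquiv α₁ h1 ∘ kroneckerHom _ _ :=
    funext fun p => (oneAlphaEquiv_kroneckerHom h1 p).symm
  rw [hcomp]
  exact (oneAlphaEquiv α₁ h1).surjective.denseRange.comp (dense_range_kroneckerHom hind)
    (oneAlphaEquiv α₁ h1).continuous

lemma not_dense_setOf_not_dioph2_of_int_relation {α₁ α₂ : ℂ} (h1 : α₁.im ≠ 0) {p₀ p₁ p₂ : ℤ}
    (hrel : (p₀ : ℝ) + p₁ * (α₂.re - α₁.re * (α₂.im / α₁.im)) + p₂ * (α₂.im / α₁.im) = 0)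
    (hp : ¬(p₁ = 0 ∧ p₂ = 0)) : ¬ Dense {lam : ℂ | ¬ dioph2 α₁ α₂ lam} := by
  set L : ℝ × ℝ →L[ℝ] ℝ :=
    (p₁ : ℝ) • ContinuousLinearMap.fst ℝ ℝ ℝ + (p₂ : ℝ) • ContinuousLinearMap.snd ℝ ℝ ℝ
  have hL : Function.Surjective L := LinearMap.surjective_of_ne_zero (f := L.toLinearMap)
    fun h => hp ⟨by simpa [L] using LinearMap.congr_fun h (1, 0),
      by simpa [L] using LinearMap.congr_fun h (0, 1)⟩
  refine not_dense_setOf_not_dioph2 (L.comp (oneAlphaEquiv α₁ h1).symm.toContinuousLinearMap)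
    (hL.comp (oneAlphaEquiv α₁ h1).symm.surjective) fun τ ξ η => ⟨p₁ * τ + p₂ * ξ - p₀ * η, ?_⟩
  rw [← oneAlphaEquiv_kroneckerHom h1 (τ, ξ, η)]
  simp only [ContinuousLinearMap.comp_apply, ContinuousLinearEquiv.coe_coe,
    ContinuousLinearEquiv.symm_apply_apply, kroneckerHom_apply, L, add_apply,
    smul_apply, ContinuousLinearMap.coe_fst', ContinuousLinearMap.coe_snd',
    smul_eq_mul]
  push_cast
  linear_combination (η : ℝ) * hrel

lemma exists_int_relation_of_rat_relation {x y : ℝ} {r₀ r₁ r₂ : ℚ}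
    (h : (r₀ : ℝ) + r₁ * x + r₂ * y = 0) (h12 : ¬(r₁ = 0 ∧ r₂ = 0)) :
    ∃ p₀ p₁ p₂ : ℤ, (p₀ : ℝ) + p₁ * x + p₂ * y = 0 ∧ ¬(p₁ = 0 ∧ p₂ = 0) := by
  have hnum : ∀ r : ℚ, (r.num : ℝ) = r * r.den := fun r => by
    exact_mod_cast (Rat.mul_den_eq_num r).symm
  refine ⟨r₀.num * (r₁.den * r₂.den), r₁.num * (r₀.den * r₂.den), r₂.num * (r₀.den * r₁.den),
    ?_, ?_⟩
  · push_cast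
    rw [hnum, hnum, hnum]
    linear_combination ((r₀.den : ℝ) * r₁.den * r₂.den) * h
  · simpa [Rat.num_eq_zero] using h12

/-- For `N = 2` and `Im α₁ ≠ 0`: `𝓜₂(α₁, α₂)` is a dense `G_δ` subset of `ℂ` iff the
three reals `1`, `Re α₂ − Re α₁ (Im α₂ / Im α₁)`, `Im α₂ / Im α₁` are linearly
independent over the rationals. -/
theorem stmt13 (α₁ α₂ : ℂ) (h1 : α₁.im ≠ 0) :
    (Dense {lam : ℂ | ¬ dioph2 α₁ α₂ lam} ∧ IsGδ {lam : ℂ | ¬ dioph2 α₁ α₂ lam}) ↔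
      (∀ r₀ r₁ r₂ : ℚ,
        (r₀ : ℝ) + (r₁ : ℝ) * (α₂.re - α₁.re * (α₂.im / α₁.im))
          + (r₂ : ℝ) * (α₂.im / α₁.im) = 0 →
        r₀ = 0 ∧ r₁ = 0 ∧ r₂ = 0) := by
  constructor
  · rintro ⟨hdense, -⟩ r₀ r₁ r₂ hrel
    by_cases h12 : r₁ = 0 ∧ r₂ = 0
    · obtain ⟨rfl, rfl⟩ := h12
      exact ⟨by exact_mod_cast (by simpa using hrel : (r₀ : ℝ) = 0), rfl, rfl⟩
    obtain ⟨p₀, p₁, p₂, hp, hp12⟩ := exists_int_relation_of_rat_relation hrel h12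
    exact absurd hdense (not_dense_setOf_not_dioph2_of_int_relation h1 hp hp12)
  · intro hQ
    have hind : ∀ q₀ q₁ q₂ : ℤ, (q₀ : ℝ) + q₁ * (α₂.re - α₁.re * (α₂.im / α₁.im))
        + q₂ * (α₂.im / α₁.im) = 0 → q₁ = 0 ∧ q₂ = 0 := fun q₀ q₁ q₂ hq => by
      obtain ⟨-, h₁, h₂⟩ := hQ q₀ q₁ q₂ (by exact_mod_cast hq)
      exact ⟨by exact_mod_cast h₁, by exact_mod_cast h₂⟩
    exact ⟨dense_setOf_not_dioph2 (dense_range_lattice h1 hind), isGδ_setOf_not_dioph2 α₁ α₂⟩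
end

section
/- Let N ≥ 2, α = (α₁,…,α_N) ∈ ℂ^N, and suppose Im α_k ≠ 0 for some k while Im α_j = 0 for every j ≠ k. Then 𝓜_N(α) ⊆ ⋃_{m ∈ ℤ} t_m, where t_m = {z ∈ ℂ : Im z = m·Im α_k}; that is, if D(α,λ) fails then Im λ/Im α_k is an integer. -/
open Finset

/-!
The imaginary part of `τ + ∑ α_j ξ_j - λ` is `ξ_k Im α_k - Im λ`, whose absolute value is at
least the norm of `Im λ` in `ℝ ⧸ (Im α_k) ℤ`. Unless `Im λ ∈ (Im α_k) ℤ` this is a positive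
lower bound uniform in `(τ, ξ)`, which gives `D(α, λ)` with any exponent.
-/

theorem exists_pos_le_abs_intCast_mul_sub {a b : ℝ} (h : ∀ m : ℤ, b ≠ m * a) :
    ∃ c > (0 : ℝ), ∀ n : ℤ, c ≤ |n * a - b| := by
  refine ⟨‖(b : AddCircle a)‖, norm_pos_iff.2 ?_, fun n => ?_⟩
  · rw [Ne, AddCircle.coe_eq_zero_iff]
    rintro ⟨m, rfl⟩
    exact h m (zsmul_eq_mul _ _)
  · calc ‖(b : AddCircle a)‖ = ‖((b - n * a : ℝ) : AddCircle a)‖ := by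
          rw [AddCircle.coe_sub, ← zsmul_eq_mul, AddCircle.coe_zsmul, AddCircle.coe_period,
            smul_zero, sub_zero]
      _ ≤ ‖b - n * a‖ := QuotientAddGroup.norm_mk_le_norm
      _ = |n * a - b| := by rw [Real.norm_eq_abs, abs_sub_comm]

theorem dioph_of_le_norm {N : ℕ} {α : Fin N → ℂ} {lam : ℂ} {c : ℝ} (hc : 0 < c)
    (h : ∀ (τ : ℤ) (ξ : Fin N → ℤ), c ≤ ‖(τ : ℂ) + (∑ j, α j * (ξ j : ℂ)) - lam‖) :
    dioph α lam := by
  refine ⟨c, hc, 1, one_pos, 1, one_pos, fun τ ξ hS => ?_⟩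
  calc c * ((|τ| : ℝ) + ∑ j, (|ξ j| : ℝ)) ^ (-1 : ℝ) ≤ c * 1 := by
        gcongr
        rw [Real.rpow_neg_one]
        exact inv_le_one_of_one_le₀ hS
    _ = c := mul_one c
    _ ≤ _ := h τ ξ

theorem im_intCast_add_sum_mul_sub {N : ℕ} {α : Fin N → ℂ} {k : Fin N}
    (hj : ∀ j, j ≠ k → (α j).im = 0) (τ : ℤ) (ξ : Fin N → ℤ) (lam : ℂ) :
    ((τ : ℂ) + (∑ j, α j * (ξ j : ℂ)) - lam).im = ξ k * (α k).im - lam.im := by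
  have hsum : (∑ j, α j * (ξ j : ℂ)).im = ξ k * (α k).im := by
    rw [Complex.im_sum, Finset.sum_eq_single k (fun j _ hjk => by simp [hj j hjk]) (by simp)]
    simp [mul_comm]
  simp [hsum]

theorem stmt14_general (N : ℕ) (α : Fin N → ℂ) (k : Fin N)
    (hj : ∀ j, j ≠ k → (α j).im = 0) :
    ∀ lam : ℂ, ¬ dioph α lam → ∃ m : ℤ, lam.im = (m : ℝ) * (α k).im := by
  intro lam hlam
  by_contra! hm
  obtain ⟨c, hc, hbound⟩ := exists_pos_le_abs_intCast_mul_sub hm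
  refine hlam (dioph_of_le_norm hc fun τ ξ => (hbound (ξ k)).trans ?_)
  rw [← im_intCast_add_sum_mul_sub hj τ ξ lam]
  exact Complex.abs_im_le_norm _

/-- If `Im α_k ≠ 0` and `Im α_j = 0` for all `j ≠ k`, then `𝓜_N(α)` is contained in the
horizontal lines `t_m = {Im z = m Im α_k}`: whenever `D(α, λ)` fails, `Im λ` is an
integer multiple of `Im α_k`. -/
theorem stmt14 (N : ℕ) (hN : 2 ≤ N) (α : Fin N → ℂ) (k : Fin N)
    (hk : (α k).im ≠ 0) (hj : ∀ j, j ≠ k → (α j).im = 0) :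
    ∀ lam : ℂ, ¬ dioph α lam → ∃ m : ℤ, lam.im = (m : ℝ) * (α k).im :=
  stmt14_general N α k hj
end

section
/- Let N ≥ 2, α = (α₁,…,α_N) ∈ ℂ^N with Im α_k ≠ 0 for some k, Im α_j = 0 for every j ≠ k, and suppose there exists j ≠ k with α_j ∈ ℝ\ℚ irrational. Then for each m ∈ ℤ the set 𝓜_N(α) ∩ t_m is dense in the horizontal line t_m = {z ∈ ℂ : Im z = m·Im α_k}. -/
/-!
For real `t`, take `τ = p`, `ξ_{j₀} = q`, `ξ_k = m` and all other `ξ_j = 0`: the quantity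
bounded below in `D(α, t + m α_k)` is then the real number `p + q α_{j₀} - t`. Since `α_{j₀}` is
irrational, the numbers `p + q α_{j₀}` with `|p| + |q|` large are dense in `ℝ`, so by Baire's
theorem the `t` approximated by them to within `(|p| + |q| + |m|)^(-n)` for every `n` are dense.
For such `t` the condition `D(α, t + m α_k)` fails, and `t + m α_k` lies on the line `t_m`.
-/

open Finset

open Set Metric

theorem dense_setOf_forall_exists_dist_lt {X ι : Type*} [PseudoMetricSpace X] [BaireSpace X]
    (φ : ι → X) (s : ℕ → Set ι) (hs : ∀ n, Dense (φ '' s n)) (r : ℕ → ι → ℝ)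
    (hr : ∀ n, ∀ i ∈ s n, 0 < r n i) :
    Dense {x | ∀ n, ∃ i ∈ s n, dist x (φ i) < r n i} := by
  have hopen : ∀ n, IsOpen (⋃ i ∈ s n, ball (φ i) (r n i)) := fun n =>
    isOpen_biUnion fun i _ => isOpen_ball
  have hdense : ∀ n, Dense (⋃ i ∈ s n, ball (φ i) (r n i)) := fun n =>
    (hs n).mono <| by
      rintro _ ⟨i, hi, rfl⟩
      exact Set.mem_biUnion hi (mem_ball_self (hr n i hi))
  convert dense_iInter_of_isOpen_nat hopen hdense using 1
  ext x
  simp only [mem_ofPred_eq, mem_iInter, mem_iUnion, mem_ball, exists_prop]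

theorem dense_range_int_add_int_mul {a : ℝ} (ha : Irrational a) :
    Dense (range fun z : ℤ × ℤ => (z.1 : ℝ) + z.2 * a) := by
  convert dense_addSubgroupClosure_pair_iff.2 (by rwa [div_one] : Irrational (a / 1)) using 1
  ext x
  simp only [Set.mem_range, Prod.exists, SetLike.mem_coe, AddSubgroup.mem_closure_pair,
    zsmul_eq_mul, mul_one]
  exact ⟨fun ⟨p, q, h⟩ => ⟨q, p, by rw [← h]; ring⟩, fun ⟨q, p, h⟩ => ⟨p, q, by rw [← h]; ring⟩⟩

theorem dense_image_compl_int_add_int_mul {a : ℝ} (ha : Irrational a) {s : Set (ℤ × ℤ)}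
    (hs : s.Finite) : Dense ((fun z : ℤ × ℤ => (z.1 : ℝ) + z.2 * a) '' sᶜ) :=
  ((dense_range_int_add_int_mul ha).sdiff_finite (hs.image _)).mono
    (range_sdiff_image_subset _ _)

theorem finite_setOf_abs_add_abs_add_lt {c : ℝ} (hc : 0 ≤ c) (n : ℕ) :
    {z : ℤ × ℤ | |(z.1 : ℝ)| + |(z.2 : ℝ)| + c < n}.Finite := by
  refine ((finite_Icc (-(n : ℤ)) n).prod (finite_Icc (-(n : ℤ)) n)).subset ?_
  rintro ⟨p, q⟩ (h : |(p : ℝ)| + |(q : ℝ)| + c < n)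
  have hp : |(p : ℝ)| ≤ n := by linarith [abs_nonneg (q : ℝ), h.le]
  have hq : |(q : ℝ)| ≤ n := by linarith [abs_nonneg (p : ℝ), h.le]
  rw [← Int.cast_abs, ← Int.cast_natCast, Int.cast_le] at hp hq
  exact ⟨abs_le.1 hp, abs_le.1 hq⟩

-- The offset `c` stands for `|m|`, the share of the fixed coordinate `ξ_k = m` in the height.
def LiouvilleWrt (a c t : ℝ) : Prop :=
  ∀ n : ℕ, ∃ p q : ℤ, (n : ℝ) ≤ |(p : ℝ)| + |(q : ℝ)| + c ∧
    |p + q * a - t| < (|(p : ℝ)| + |(q : ℝ)| + c) ^ (-(n : ℝ))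

theorem dense_setOf_liouvilleWrt {a : ℝ} (ha : Irrational a) {c : ℝ} (hc : 0 ≤ c) :
    Dense {t | LiouvilleWrt a c t} := by
  have hs : ∀ n : ℕ, Dense ((fun z : ℤ × ℤ => (z.1 : ℝ) + z.2 * a) ''
      {z | (n : ℝ) ≤ |(z.1 : ℝ)| + |(z.2 : ℝ)| + c}) := fun n => by
    simpa only [compl_ofPred, not_lt] using
      dense_image_compl_int_add_int_mul ha (finite_setOf_abs_add_abs_add_lt hc n)
  have hr : ∀ n : ℕ, ∀ z ∈ {z : ℤ × ℤ | (n : ℝ) ≤ |(z.1 : ℝ)| + |(z.2 : ℝ)| + c},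
      0 < (|(z.1 : ℝ)| + |(z.2 : ℝ)| + c) ^ (-(n : ℝ)) := by
    rintro (_ | n) z hz
    · simp
    · exact Real.rpow_pos_of_pos (lt_of_lt_of_le (by positivity) hz) _
  refine (dense_setOf_forall_exists_dist_lt _ _ hs _ hr).mono fun t ht n => ?_
  obtain ⟨⟨p, q⟩, hz, hdist⟩ := ht n
  exact ⟨p, q, hz, by rwa [Real.dist_eq, abs_sub_comm] at hdist⟩

theorem rpow_neg_le_mul_rpow_neg {S C M n : ℝ} (hC : 0 < C) (hM : 0 ≤ M) (hMn : M + 1 ≤ n)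
    (hCn : C⁻¹ ≤ n) (hnS : n ≤ S) : S ^ (-n) ≤ C * S ^ (-M) := by
  have hS : 0 < S := by linarith
  calc S ^ (-n) ≤ S ^ (-M - 1) := Real.rpow_le_rpow_of_exponent_le (by linarith) (by linarith)
    _ = S⁻¹ * S ^ (-M) := by rw [Real.rpow_sub hS, Real.rpow_one, div_eq_inv_mul]
    _ ≤ C * S ^ (-M) := by gcongr; exact inv_le_of_inv_le₀ hC (hCn.trans hnS)

theorem not_dioph_of_forall_exists_norm_lt {N : ℕ} (α : Fin N → ℂ) (lam : ℂ)
    (h : ∀ n : ℕ, ∃ (τ : ℤ) (ξ : Fin N → ℤ), (n : ℝ) ≤ |(τ : ℝ)| + ∑ j, |(ξ j : ℝ)| ∧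
      ‖(τ : ℂ) + ∑ j, α j * ξ j - lam‖ < (|(τ : ℝ)| + ∑ j, |(ξ j : ℝ)|) ^ (-(n : ℝ))) :
    ¬ dioph α lam := by
  rintro ⟨C, hC, M, hM, R, -, H⟩
  obtain ⟨n, hn⟩ := exists_nat_gt (max R (max (M + 1) C⁻¹))
  simp only [max_lt_iff] at hn
  obtain ⟨τ, ξ, hsize, happrox⟩ := h n
  refine (H τ ξ (by linarith)).not_gt (happrox.trans_le ?_)
  exact rpow_neg_le_mul_rpow_neg hC hM.le hn.2.1.le hn.2.2.le hsize

theorem not_dioph_add_intCast_mul {N : ℕ} {α : Fin N → ℂ} {j₀ k : Fin N} (hj₀ : j₀ ≠ k)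
    {a : ℝ} (hα : α j₀ = a) (m : ℤ) {t : ℝ} (ht : LiouvilleWrt a |(m : ℝ)| t) :
    ¬ dioph α (t + m * α k) := by
  refine not_dioph_of_forall_exists_norm_lt α _ fun n => ?_
  obtain ⟨p, q, hsize, happrox⟩ := ht n
  let ξ : Fin N → ℤ := Pi.single j₀ q + Pi.single k m
  have hξ : ∀ j, j ≠ j₀ ∧ j ≠ k → ξ j = 0 := fun j hne => by simp [ξ, hne.1, hne.2]
  have hξj₀ : ξ j₀ = q := by simp [ξ, hj₀]
  have hξk : ξ k = m := by simp [ξ, hj₀.symm]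
  have hsum : ∑ j, |(ξ j : ℝ)| = |(q : ℝ)| + |(m : ℝ)| := by
    rw [Fintype.sum_eq_add j₀ k hj₀ fun j hne => by simp [hξ j hne], hξj₀, hξk]
  have hval : (p : ℂ) + ∑ j, α j * ξ j - (t + m * α k) = ((p + q * a - t : ℝ) : ℂ) := by
    rw [Fintype.sum_eq_add j₀ k hj₀ fun j hne => by simp [hξ j hne], hξj₀, hξk, hα]
    push_cast
    ring
  refine ⟨p, ξ, ?_, ?_⟩
  · rw [hsum, ← add_assoc]
    exact hsize
  · rwa [hval, Complex.norm_real, Real.norm_eq_abs, hsum, ← add_assoc]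

theorem stmt16_general (N : ℕ) (α : Fin N → ℂ) (k : Fin N)
    (hj : ∀ j, j ≠ k → (α j).im = 0)
    (j₀ : Fin N) (hj₀ : j₀ ≠ k) (hirr : Irrational (α j₀).re) (m : ℤ) :
    ∀ x : ℂ, x.im = (m : ℝ) * (α k).im → ∀ ε > (0 : ℝ),
      ∃ lam : ℂ, ¬ dioph α lam ∧ lam.im = (m : ℝ) * (α k).im ∧
        ‖lam - x‖ < ε := by
  intro x hx ε hε
  obtain ⟨t, hball, ht⟩ :=
    (dense_setOf_liouvilleWrt hirr (abs_nonneg (m : ℝ))).inter_open_nonempty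
      (ball (x.re - m * (α k).re) ε) isOpen_ball ⟨_, mem_ball_self hε⟩
  have hα : α j₀ = (α j₀).re := Complex.ext rfl (by simp [hj j₀ hj₀])
  refine ⟨t + m * α k, not_dioph_add_intCast_mul hj₀ hα m ht, by simp, ?_⟩
  have hdiff : (t : ℂ) + m * α k - x = ((t - (x.re - m * (α k).re) : ℝ) : ℂ) :=
    Complex.ext (by simp [sub_sub_eq_add_sub]) (by simp [hx])
  rwa [hdiff, Complex.norm_real, Real.norm_eq_abs, ← Real.dist_eq, ← mem_ball]

/-- If `Im α_k ≠ 0`, `Im α_j = 0` for all `j ≠ k`, and some `α_j` (`j ≠ k`) is an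
irrational real, then for each `m ∈ ℤ` the set `𝓜_N(α) ∩ t_m` is dense in the line
`t_m = {Im z = m Im α_k}`. -/
theorem stmt16 (N : ℕ) (hN : 2 ≤ N) (α : Fin N → ℂ) (k : Fin N)
    (hk : (α k).im ≠ 0) (hj : ∀ j, j ≠ k → (α j).im = 0)
    (j₀ : Fin N) (hj₀ : j₀ ≠ k) (hirr : Irrational (α j₀).re) (m : ℤ) :
    ∀ x : ℂ, x.im = (m : ℝ) * (α k).im → ∀ ε > (0 : ℝ),
      ∃ lam : ℂ, ¬ dioph α lam ∧ lam.im = (m : ℝ) * (α k).im ∧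
        ‖lam - x‖ < ε :=
  stmt16_general N α k hj j₀ hj₀ hirr m
end

section
/- Let α₁, α₂ ∈ ℂ with Im α₁ ≠ 0, Im α₂ ≠ 0, and Im α₁/Im α₂ = p/q a rational number in lowest terms (p ∈ ℤ, q ∈ ℕ, q ≥ 1, gcd(p,q) = 1). Suppose q·Re α₁ − p·Re α₂ = p̃/q̃ is rational in lowest terms (or p̃ = 0, q̃ = 1). Then: (a) 𝓝₂(α₁,α₂) = q̃⁻¹ℤ = {m/q̃ : m ∈ ℤ}; (b) 𝓜₂(α₁,α₂) ⊆ ⋃_{m ∈ ℤ} ℓ_m, where ℓ_m = {λ ∈ ℂ : Im λ = m·Im α₂/q}; and (c) for each m ∈ ℤ the set ℓ_m ∩ 𝓜₂(α₁,α₂) is countable and discrete in ℓ_m. -/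
def dioph2Hom (a b : ℂ) : ℤ × ℤ × ℤ →+ ℂ where
  toFun v := v.1 + a * v.2.1 + b * v.2.2
  map_zero' := by simp
  map_add' u v := by simp only [Prod.fst_add, Prod.snd_add, Int.cast_add]; ring

@[simp]
lemma dioph2Hom_apply (a b : ℂ) (τ ξ η : ℤ) :
    dioph2Hom a b (τ, ξ, η) = τ + a * ξ + b * η := rfl

lemma dioph2_of_notMem_closure {a b lam : ℂ}
    (h : lam ∉ closure ((dioph2Hom a b).range : Set ℂ)) : dioph2 a b lam := by
  set δ := Metric.infDist lam ((dioph2Hom a b).range : Set ℂ)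
  have hδ : 0 < δ :=
    (Metric.infDist_pos_iff_notMem_closure ⟨0, zero_mem _⟩).mp h
  refine ⟨δ, hδ, 1, one_pos, 1, one_pos, fun τ ξ η hR => ?_⟩
  calc δ * ((|(τ : ℝ)| + |(ξ : ℝ)| + |(η : ℝ)|) ^ (-1 : ℝ))
      ≤ δ := mul_le_of_le_one_right hδ.le
        (Real.rpow_le_one_of_one_le_of_nonpos hR (by norm_num))
    _ ≤ dist lam (dioph2Hom a b (τ, ξ, η)) :=
        Metric.infDist_le_dist_of_mem ⟨(τ, ξ, η), rfl⟩
    _ = _ := by rw [dist_comm, dist_eq_norm, dioph2Hom_apply]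

lemma not_dioph2_of_infinite {a b lam : ℂ}
    (h : {v | dioph2Hom a b v = lam}.Infinite) : ¬ dioph2 a b lam := by
  rintro ⟨C, hC, M, -, R, hR0, hbound⟩
  refine h ((isCompact_closedBall (0 : ℤ × ℤ × ℤ) R).finite_of_discrete.subset ?_)
  rintro ⟨τ, ξ, η⟩ hv
  have hsmall : |(τ : ℝ)| + |(ξ : ℝ)| + |(η : ℝ)| < R := by
    by_contra! hR
    have hpos : 0 < C * ((|(τ : ℝ)| + |(ξ : ℝ)| + |(η : ℝ)|) ^ (-M)) :=
      mul_pos hC (Real.rpow_pos_of_pos (hR0.trans_le hR) _)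
    have := hbound τ ξ η hR
    simp only [Set.mem_ofPred_eq, dioph2Hom_apply] at hv
    rw [hv, sub_self, norm_zero] at this
    linarith
  rw [mem_closedBall_zero_iff, Prod.norm_def, Prod.norm_def, Int.norm_eq_abs, Int.norm_eq_abs,
    Int.norm_eq_abs]
  have := abs_nonneg (τ : ℝ); have := abs_nonneg (ξ : ℝ); have := abs_nonneg (η : ℝ)
  exact max_le (by linarith) (max_le (by linarith) (by linarith))

lemma not_dioph2_of_mem_range {a b lam : ℂ} {κ : ℤ × ℤ × ℤ} (hκ : κ ≠ 0)
    (hker : κ ∈ (dioph2Hom a b).ker) (h : lam ∈ (dioph2Hom a b).range) : ¬ dioph2 a b lam := by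
  obtain ⟨v, rfl⟩ := h
  apply not_dioph2_of_infinite
  refine Set.infinite_of_injective_forall_mem (f := fun t : ℤ => v + t • κ) ?_ fun t => ?_
  · intro s t hst
    exact smul_left_injective ℤ hκ (add_left_cancel hst)
  · rw [Set.mem_ofPred_eq, map_add, map_zsmul, AddMonoidHom.mem_ker.mp hker, smul_zero, add_zero]

lemma not_dioph2_iff_mem_range {a b lam : ℂ}
    (hclosed : IsClosed ((dioph2Hom a b).range : Set ℂ))
    (hker : ∃ κ ≠ 0, κ ∈ (dioph2Hom a b).ker) :
    ¬ dioph2 a b lam ↔ lam ∈ (dioph2Hom a b).range := by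
  obtain ⟨κ, hκ, hκ0⟩ := hker
  refine ⟨fun h => ?_, not_dioph2_of_mem_range hκ hκ0⟩
  by_contra hlam
  exact h (dioph2_of_notMem_closure (by rwa [hclosed.closure_eq]))

lemma AddSubgroup.isClosed_of_forall_mem_zspan {u : ℝ} (hu : u ≠ 0) {w : ℂ} (hw : w.im ≠ 0)
    (H : AddSubgroup ℂ) (hH : ∀ z ∈ H, ∃ m n : ℤ, m * u + n * w = z) : IsClosed (H : Set ℂ) := by
  have hli : LinearIndependent ℝ ![(u : ℂ), w] := by
    rw [LinearIndependent.pair_iff]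
    intro s t hst
    have ht : t = 0 := by simpa [hw] using congrArg Complex.im hst
    have hre : s * u + t * w.re = 0 := by simpa using congrArg Complex.re hst
    rw [ht, zero_mul, add_zero, mul_eq_zero] at hre
    exact ⟨hre.resolve_right hu, ht⟩
  let b := basisOfLinearIndependentOfCardEqFinrank hli (by simp [Complex.finrank_real_complex])
  have : DiscreteTopology H := by
    refine DiscreteTopology.of_subset
      (inferInstance : DiscreteTopology (Submodule.span ℤ (Set.range b))) ?_
    intro z hz
    obtain ⟨m, n, rfl⟩ := hH z hz
    rw [coe_basisOfLinearIndependentOfCardEqFinrank, Matrix.range_cons_cons_empty]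
    exact Submodule.mem_span_pair.mpr ⟨m, n, by simp⟩
  exact AddSubgroup.isClosed_of_discrete

lemma Int.exists_eq_mul_of_mul_add_mul_eq_zero {p q ξ η : ℤ} (hpq : IsCoprime p q) (hq : q ≠ 0)
    (h : p * ξ + q * η = 0) : ∃ k, ξ = q * k ∧ η = -(p * k) := by
  obtain ⟨k, rfl⟩ : q ∣ ξ := hpq.symm.dvd_of_dvd_mul_left ⟨-η, by linear_combination h⟩
  refine ⟨k, rfl, mul_left_cancel₀ hq ?_⟩
  linear_combination h

section RationalRelation

variable {a b : ℂ} {p p' : ℤ} {q q' : ℕ}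

lemma dioph2Hom_apply_q_neg_p (hrel : (q : ℂ) * a - p * b = p' / q') (τ k : ℤ) :
    dioph2Hom a b (τ, q * k, -(p * k)) = τ + k * p' / q' := by
  rw [dioph2Hom_apply]
  push_cast
  linear_combination k * hrel

lemma natCast_mul_im_dioph2Hom (hrel : (q : ℂ) * a - p * b = p' / q') (τ ξ η : ℤ) :
    q * (dioph2Hom a b (τ, ξ, η)).im = (p * ξ + q * η) * b.im := by
  have him : q * a.im - p * b.im = 0 := by
    simpa using congrArg Complex.im hrel
  simp only [dioph2Hom_apply, Complex.add_im, Complex.mul_im, Complex.intCast_re,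
    Complex.intCast_im, mul_zero]
  linear_combination ξ * him

lemma mem_ker_dioph2Hom (hrel : (q : ℂ) * a - p * b = p' / q') (hq' : q' ≠ 0) :
    ((-p', q * q', -(p * q')) : ℤ × ℤ × ℤ) ∈ (dioph2Hom a b).ker := by
  rw [AddMonoidHom.mem_ker]
  rw [dioph2Hom_apply_q_neg_p hrel]
  push_cast
  field_simp
  ring

lemma dioph2Hom_mem_zspan (hrel : (q : ℂ) * a - p * b = p' / q') (hq : q ≠ 0) (hq' : q' ≠ 0)
    (v : ℤ × ℤ × ℤ) :
    ∃ m n : ℤ, m * ((q * q' : ℕ) : ℝ)⁻¹ + n * (b / q) = dioph2Hom a b v := by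
  obtain ⟨τ, ξ, η⟩ := v
  refine ⟨q * q' * τ + p' * ξ, p * ξ + q * η, ?_⟩
  rw [dioph2Hom_apply]
  have ha : a = (p * b + p' / q') / q := by
    rw [eq_div_iff (by exact_mod_cast hq)]
    linear_combination hrel
  rw [ha]
  push_cast
  field_simp
  ring

lemma isClosed_range_dioph2Hom (hrel : (q : ℂ) * a - p * b = p' / q') (hq : q ≠ 0)
    (hq' : q' ≠ 0) (hb : b.im ≠ 0) : IsClosed ((dioph2Hom a b).range : Set ℂ) := by
  refine AddSubgroup.isClosed_of_forall_mem_zspan (u := ((q * q' : ℕ) : ℝ)⁻¹) (w := b / q)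
    (by simp [hq, hq']) ?_ _ ?_
  · simpa [Complex.div_natCast_im] using ⟨hb, hq⟩
  · rintro _ ⟨v, rfl⟩
    exact dioph2Hom_mem_zspan hrel hq hq' v

lemma ofReal_mem_range_dioph2Hom_iff (hrel : (q : ℂ) * a - p * b = p' / q')
    (hpq : IsCoprime p q) (hpq' : IsCoprime p' q') (hq : q ≠ 0) (hq' : q' ≠ 0) (hb : b.im ≠ 0)
    (x : ℝ) : (x : ℂ) ∈ (dioph2Hom a b).range ↔ ∃ n : ℤ, x = n / q' := by
  constructor
  · rintro ⟨⟨τ, ξ, η⟩, hx⟩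
    have hline : p * ξ + q * η = 0 := by
      have := natCast_mul_im_dioph2Hom hrel τ ξ η
      rw [hx, Complex.ofReal_im, mul_zero, eq_comm, mul_eq_zero] at this
      exact_mod_cast this.resolve_right hb
    obtain ⟨k, rfl, rfl⟩ := Int.exists_eq_mul_of_mul_add_mul_eq_zero hpq (by exact_mod_cast hq) hline
    refine ⟨q' * τ + k * p', ?_⟩
    rw [dioph2Hom_apply_q_neg_p hrel] at hx
    apply_fun Complex.re at hx
    simp only [Complex.add_re, Complex.intCast_re, Complex.div_natCast_re, Complex.mul_re,
      Complex.intCast_im, mul_zero, sub_zero, Complex.ofReal_re] at hx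
    rw [← hx]
    push_cast
    field_simp
  · rintro ⟨n, rfl⟩
    obtain ⟨u, v, huv⟩ := hpq'
    have huv' : (u : ℂ) * p' + v * q' = 1 := by exact_mod_cast huv
    refine ⟨(n * v, q * (n * u), -(p * (n * u))), ?_⟩
    rw [dioph2Hom_apply_q_neg_p hrel]
    push_cast
    field_simp
    linear_combination (n : ℂ) * huv'

lemma eq_of_mem_range_dioph2Hom_of_im_eq (hrel : (q : ℂ) * a - p * b = p' / q')
    (hpq : IsCoprime p q) (hpq' : IsCoprime p' q') (hq : q ≠ 0) (hq' : q' ≠ 0) (hb : b.im ≠ 0)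
    {z w : ℂ} (hz : z ∈ (dioph2Hom a b).range) (hw : w ∈ (dioph2Hom a b).range)
    (him : z.im = w.im) (hzw : ‖z - w‖ < 1 / q') : z = w := by
  have hreal : (((z - w).re : ℝ) : ℂ) = z - w :=
    Complex.ext (by simp) (by simp [him])
  obtain ⟨n, hn⟩ := (ofReal_mem_range_dioph2Hom_iff hrel hpq hpq' hq hq' hb _).1
    (hreal ▸ sub_mem hz hw)
  have hq'pos : (0 : ℝ) < q' := by positivity
  have : |(n : ℝ)| < 1 := by
    rw [← hreal, Complex.norm_real, Real.norm_eq_abs, hn, abs_div, Nat.abs_cast,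
      div_lt_div_iff_of_pos_right hq'pos] at hzw
    exact hzw
  have hn0 : n = 0 := by exact_mod_cast Int.abs_lt_one_iff.mp (by exact_mod_cast this)
  rw [← sub_eq_zero, ← hreal, hn, hn0]
  simp

end RationalRelation

theorem stmt17_general (α₁ α₂ : ℂ) (h2 : α₂.im ≠ 0)
    (p : ℤ) (q : ℕ) (hq : 1 ≤ q) (hpq : Int.gcd p (q : ℤ) = 1)
    (hratio : α₁.im / α₂.im = (p : ℝ) / (q : ℝ))
    (p' : ℤ) (q' : ℕ) (hq' : 1 ≤ q') (hpq' : Int.gcd p' (q' : ℤ) = 1)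
    (hres : (q : ℝ) * α₁.re - (p : ℝ) * α₂.re = (p' : ℝ) / (q' : ℝ)) :
    {x : ℝ | ¬ dioph2 α₁ α₂ (x : ℂ)} = {x : ℝ | ∃ m : ℤ, x = (m : ℝ) / (q' : ℝ)} ∧
      (∀ lam : ℂ, ¬ dioph2 α₁ α₂ lam → ∃ m : ℤ, lam.im = (m : ℝ) * α₂.im / (q : ℝ)) ∧
      (∀ m : ℤ,
        Set.Countable {lam : ℂ | ¬ dioph2 α₁ α₂ lam ∧ lam.im = (m : ℝ) * α₂.im / (q : ℝ)} ∧
        ∀ lam ∈ {lam : ℂ | ¬ dioph2 α₁ α₂ lam ∧ lam.im = (m : ℝ) * α₂.im / (q : ℝ)},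
          ∃ ε > (0 : ℝ),
            ∀ z ∈ {lam : ℂ | ¬ dioph2 α₁ α₂ lam ∧ lam.im = (m : ℝ) * α₂.im / (q : ℝ)},
              ‖z - lam‖ < ε → z = lam) := by
  have hq0 : q ≠ 0 := by omega
  have hq'0 : q' ≠ 0 := by omega
  have hpq := Int.isCoprime_iff_gcd_eq_one.mpr hpq
  have hpq' := Int.isCoprime_iff_gcd_eq_one.mpr hpq'
  have hrel : (q : ℂ) * α₁ - p * α₂ = p' / q' := by
    refine Complex.ext (by simpa using hres) ?_
    rw [div_eq_div_iff h2 (by positivity)] at hratio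
    simp only [Complex.sub_im, Complex.mul_im, Complex.natCast_re, Complex.natCast_im,
      Complex.intCast_re, Complex.intCast_im, Complex.div_natCast_im]
    linear_combination hratio
  have key (lam : ℂ) : ¬ dioph2 α₁ α₂ lam ↔ lam ∈ (dioph2Hom α₁ α₂).range :=
    not_dioph2_iff_mem_range (isClosed_range_dioph2Hom hrel hq0 hq'0 h2)
      ⟨(-p', q * q', -(p * q')), by simp [hq0, hq'0], mem_ker_dioph2Hom hrel hq'0⟩
  refine ⟨?_, ?_, fun m => ⟨?_, ?_⟩⟩
  · ext x
    exact (key x).trans (ofReal_mem_range_dioph2Hom_iff hrel hpq hpq' hq0 hq'0 h2 x)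
  · intro lam hlam
    obtain ⟨⟨τ, ξ, η⟩, rfl⟩ := (key lam).1 hlam
    refine ⟨p * ξ + q * η, ?_⟩
    rw [eq_div_iff (by positivity), mul_comm, natCast_mul_im_dioph2Hom hrel]
    push_cast
    ring
  · exact (Set.countable_range (dioph2Hom α₁ α₂)).mono fun lam hlam => (key lam).1 hlam.1
  · intro lam hlam
    refine ⟨1 / q', by positivity, fun z hz hzl => ?_⟩
    exact eq_of_mem_range_dioph2Hom_of_im_eq hrel hpq hpq' hq0 hq'0 h2 ((key z).1 hz.1)
      ((key lam).1 hlam.1) (hz.2.trans hlam.2.symm) hzl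

/-- Case `Im α₁ / Im α₂ = p/q ∈ ℚ` and `q Re α₁ − p Re α₂ = p̃/q̃ ∈ ℚ` (lowest terms):
(a) `𝓝₂ = q̃⁻¹ℤ`; (b) `𝓜₂` lies in the lines `ℓ_m = {Im λ = m Im α₂ / q}`;
(c) each `ℓ_m ∩ 𝓜₂` is countable and discrete in `ℓ_m`. -/
theorem stmt17 (α₁ α₂ : ℂ) (h1 : α₁.im ≠ 0) (h2 : α₂.im ≠ 0)
    (p : ℤ) (q : ℕ) (hq : 1 ≤ q) (hpq : Int.gcd p (q : ℤ) = 1)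
    (hratio : α₁.im / α₂.im = (p : ℝ) / (q : ℝ))
    (p' : ℤ) (q' : ℕ) (hq' : 1 ≤ q') (hpq' : Int.gcd p' (q' : ℤ) = 1)
    (hres : (q : ℝ) * α₁.re - (p : ℝ) * α₂.re = (p' : ℝ) / (q' : ℝ)) :
    {x : ℝ | ¬ dioph2 α₁ α₂ (x : ℂ)} = {x : ℝ | ∃ m : ℤ, x = (m : ℝ) / (q' : ℝ)} ∧
      (∀ lam : ℂ, ¬ dioph2 α₁ α₂ lam → ∃ m : ℤ, lam.im = (m : ℝ) * α₂.im / (q : ℝ)) ∧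
      (∀ m : ℤ,
        Set.Countable {lam : ℂ | ¬ dioph2 α₁ α₂ lam ∧ lam.im = (m : ℝ) * α₂.im / (q : ℝ)} ∧
        ∀ lam ∈ {lam : ℂ | ¬ dioph2 α₁ α₂ lam ∧ lam.im = (m : ℝ) * α₂.im / (q : ℝ)},
          ∃ ε > (0 : ℝ),
            ∀ z ∈ {lam : ℂ | ¬ dioph2 α₁ α₂ lam ∧ lam.im = (m : ℝ) * α₂.im / (q : ℝ)},
              ‖z - lam‖ < ε → z = lam) :=
  stmt17_general α₁ α₂ h2 p q hq hpq hratio p' q' hq' hpq' hres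
end

section
/- Let α₁, α₂ ∈ ℂ with Im α₁ ≠ 0 and Im α₂ ≠ 0, and suppose the ratio Im α₁/Im α₂ is irrational and is not a Liouville number. Then 𝓝₂(α₁,α₂) = ∅; that is, the Diophantine condition D((α₁,α₂),λ) holds for every real λ. -/
section LinearForm

variable {r : ℝ} {n : ℕ}

theorem Irrational.exists_one_div_pow_le_abs_sub (hirr : Irrational r) (hlio : ¬ Liouville r) :
    ∃ n : ℕ, ∀ a b : ℤ, 1 < b → 1 / (b : ℝ) ^ n ≤ |r - a / b| := by
  simp only [Liouville, not_forall, not_exists, not_and, not_lt] at hlio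
  obtain ⟨n, hn⟩ := hlio
  exact ⟨n, fun a b hb => hn a b hb (hirr.ne_rational a b)⟩

variable (hn : ∀ a b : ℤ, 1 < b → 1 / (b : ℝ) ^ n ≤ |r - a / b|)
include hn

/-- The denominator is doubled so that it exceeds `1` even when `ξ = 1`. -/
theorem one_div_pow_le_abs_mul_add_of_pos {ξ : ℤ} (hξ : 0 < ξ) (η : ℤ) :
    1 / (2 * ξ : ℝ) ^ n ≤ |ξ * r + η| := by
  have hξ1 : (1 : ℝ) ≤ ξ := by exact_mod_cast hξ
  have hξ0 : (0 : ℝ) < ξ := by exact_mod_cast hξ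
  have hfactor : (ξ : ℝ) * r + η = ξ * (r - (-2 * η : ℤ) / (2 * ξ : ℤ)) := by
    push_cast
    field_simp
    ring
  calc 1 / (2 * ξ : ℝ) ^ n ≤ ξ * (1 / (2 * ξ : ℝ) ^ n) :=
        le_mul_of_one_le_left (by positivity) hξ1
    _ ≤ ξ * |r - (-2 * η : ℤ) / (2 * ξ : ℤ)| := by
      gcongr
      exact_mod_cast hn _ _ (by omega)
    _ = |ξ * r + η| := by rw [hfactor, abs_mul, abs_of_pos hξ0]

theorem one_div_pow_le_abs_mul_add_of_ne_zero {ξ : ℤ} (hξ : ξ ≠ 0) (η : ℤ) :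
    1 / (2 * |(ξ : ℝ)|) ^ n ≤ |ξ * r + η| := by
  rcases hξ.lt_or_gt with hneg | hpos
  · have := one_div_pow_le_abs_mul_add_of_pos hn (neg_pos.2 hneg) (-η)
    rw [abs_of_neg (by exact_mod_cast hneg), ← abs_neg]
    push_cast at this
    convert this using 2; ring
  · rw [abs_of_pos (by exact_mod_cast hpos)]
    exact one_div_pow_le_abs_mul_add_of_pos hn hpos η

theorem one_div_pow_le_abs_mul_add {ξ η : ℤ} (h : ξ ≠ 0 ∨ η ≠ 0) {s : ℝ}
    (hs : |(ξ : ℝ)| + |(η : ℝ)| ≤ s) : 1 / (2 * s) ^ n ≤ |ξ * r + η| := by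
  by_cases hξ : ξ = 0
  · subst hξ
    have hη : (1 : ℝ) ≤ |(η : ℝ)| := by
      exact_mod_cast Int.one_le_abs (h.resolve_left (not_not.2 rfl))
    simp only [Int.cast_zero, abs_zero, zero_add, zero_mul] at hs ⊢
    calc _ ≤ (1 : ℝ) := div_le_one_of_le₀ (one_le_pow₀ (by linarith)) (pow_nonneg (by linarith) _)
      _ ≤ _ := hη
  · refine le_trans ?_ (one_div_pow_le_abs_mul_add_of_ne_zero hn hξ η)
    have : 0 < |(ξ : ℝ)| := abs_pos.2 (Int.cast_ne_zero.2 hξ)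
    gcongr
    linarith [abs_nonneg (η : ℝ)]

end LinearForm

theorem abs_im_mul_abs_int_mul_add_le_norm {a b : ℂ} {r : ℝ} (hr : a.im = r * b.im)
    (τ ξ η : ℤ) (x : ℝ) : |b.im| * |ξ * r + η| ≤ ‖(τ : ℂ) + a * ξ + b * η - x‖ := by
  calc _ = |((τ : ℂ) + a * ξ + b * η - x).im| := by
        simp only [Complex.sub_im, Complex.add_im, Complex.intCast_im, Complex.ofReal_im,
          Complex.mul_im, Complex.intCast_re, hr, mul_zero, zero_add, sub_zero]
        rw [← abs_mul]
        congr 1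
        ring
    _ ≤ _ := Complex.abs_im_le_norm _

theorem rpow_neg_natCast_add_one_le_inv_pow {s : ℝ} (hs : 1 ≤ s) (n : ℕ) :
    s ^ (-((n : ℝ) + 1)) ≤ (s ^ n)⁻¹ := by
  rw [← Real.rpow_natCast, ← Real.rpow_neg (by positivity)]
  exact Real.rpow_le_rpow_of_exponent_le hs (by linarith)

theorem stmt19_general (α₁ α₂ : ℂ) (h2 : α₂.im ≠ 0)
    (hirr : Irrational (α₁.im / α₂.im)) (hlio : ¬ Liouville (α₁.im / α₂.im)) :
    ∀ x : ℝ, dioph2 α₁ α₂ (x : ℂ) := by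
  intro x
  obtain ⟨n, hn⟩ := hirr.exists_one_div_pow_le_abs_sub hlio
  set c := min 1 (|α₂.im| / 2 ^ n)
  refine ⟨c, by positivity, n + 1, by positivity, |x| + 1, by positivity, fun τ ξ η hR => ?_⟩
  set s := |(τ : ℝ)| + |(ξ : ℝ)| + |(η : ℝ)|
  have hs : 1 ≤ s := (le_add_of_nonneg_left (abs_nonneg x)).trans hR
  refine (mul_le_mul_of_nonneg_left (rpow_neg_natCast_add_one_le_inv_pow hs n)
    (by positivity)).trans ?_
  by_cases h : ξ = 0 ∧ η = 0
  · obtain ⟨rfl, rfl⟩ := h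
    simp only [Int.cast_zero, mul_zero, add_zero]
    calc c * (s ^ n)⁻¹ ≤ 1 * 1 :=
          mul_le_mul (min_le_left _ _) (inv_le_one_of_one_le₀ (one_le_pow₀ hs)) (by positivity)
            zero_le_one
      _ ≤ |(τ : ℝ)| - |x| := by simp only [s, Int.cast_zero, abs_zero, add_zero] at hR; linarith
      _ ≤ ‖(τ : ℂ) - x‖ := by simpa using norm_sub_norm_le (τ : ℂ) x
  · calc c * (s ^ n)⁻¹ ≤ |α₂.im| / 2 ^ n * (s ^ n)⁻¹ := by gcongr; exact min_le_right _ _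
      _ = |α₂.im| * (1 / (2 * s) ^ n) := by rw [mul_pow]; ring
      _ ≤ |α₂.im| * |ξ * (α₁.im / α₂.im) + η| := by
        gcongr
        exact one_div_pow_le_abs_mul_add hn (not_and_or.1 h)
          (by simp only [s]; linarith [abs_nonneg (τ : ℝ)])
      _ ≤ _ := abs_im_mul_abs_int_mul_add_le_norm (div_mul_cancel₀ _ h2).symm τ ξ η x

/-- If `Im α₁ ≠ 0`, `Im α₂ ≠ 0` and `Im α₁ / Im α₂` is irrational and not Liouville,
then `𝓝₂(α₁, α₂) = ∅`: `D((α₁, α₂), λ)` holds for every real `λ`. -/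
theorem stmt19 (α₁ α₂ : ℂ) (h1 : α₁.im ≠ 0) (h2 : α₂.im ≠ 0)
    (hirr : Irrational (α₁.im / α₂.im)) (hlio : ¬ Liouville (α₁.im / α₂.im)) :
    ∀ x : ℝ, dioph2 α₁ α₂ (x : ℂ) :=
  stmt19_general α₁ α₂ h2 hirr hlio
end
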